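/- arXiv:2308.03667 — 7 statements merged into one kernel-verified Lean document; each statement's English description precedes it below -/
import Mathlib

section
/- Let μ be a nonzero finite Borel measure on ℝ, let k ≥ 1 be an integer, and assume μ has a finite absolute moment of order 2(k+1), i.e. 𝔞_{2(k+1)}(μ) < ∞. Then for every y > 0 the derivative of θ_μ satisfies θ_μ′(y) = ∫_ℝ 2yt²/(y² + t²)² dμ(t) ≥ 2·𝔞_k(μ)²·y / (𝔞_{2(k−1)}(μ)·y⁴ + 2·𝔞_{2k}(μ)·y² + 𝔞_{2(k+1)}(μ)). -/
open MeasureTheory Filter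

/-- The Cauchy transform of a measure `μ` on `ℝ`. -/
noncomputable def cauchyTransform (μ : Measure ℝ) (z : ℂ) : ℂ :=
  ∫ t : ℝ, (z - (t : ℂ))⁻¹ ∂μ

/-- The function `θ_μ(y) = -y · Im(G_μ(iy))`. -/
noncomputable def thetaFun (μ : Measure ℝ) (y : ℝ) : ℝ :=
  -(y * (cauchyTransform μ (Complex.I * y)).im)

/-- The `k`-th absolute moment `𝔞_k(μ) = ∫ |t|^k dμ(t)`. -/
noncomputable def absMoment (μ : Measure ℝ) (k : ℕ) : ℝ :=
  ∫ t : ℝ, |t| ^ k ∂μ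

/-! For `y ≠ 0` one has `θ_μ(y) = ∫ y² / (y² + t²) dμ(t)`. Its integrand has `y`-derivative
`f(t) = 2yt² / (y² + t²)²`, bounded by `1 / (2y)`, so it may be differentiated under the integral.
The lower bound is Cauchy–Schwarz: `|t|^k = √(f(t) g(t))` for
`g(t) = |t|^(2(k-1)) (y² + t²)² / (2y)`, and `∫ g` expands into the three moments of the
denominator. -/

section Integration

variable {α : Type*} [MeasurableSpace α] {μ : Measure α}

theorem memLp_two_sqrt {f : α → ℝ} (hf₀ : 0 ≤ᵐ[μ] f) (hf : Integrable f μ) :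
    MemLp (fun a => √(f a)) 2 μ := by
  refine (memLp_two_iff_integrable_sq
    (Real.continuous_sqrt.comp_aestronglyMeasurable hf.aestronglyMeasurable)).2 (hf.congr ?_)
  filter_upwards [hf₀] with a ha using (Real.sq_sqrt ha).symm

theorem sq_integral_sqrt_mul_le {f g : α → ℝ} (hf₀ : 0 ≤ᵐ[μ] f) (hg₀ : 0 ≤ᵐ[μ] g)
    (hf : Integrable f μ) (hg : Integrable g μ) :
    (∫ a, √(f a * g a) ∂μ) ^ 2 ≤ (∫ a, f a ∂μ) * ∫ a, g a ∂μ := by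
  have holder := integral_mul_le_Lp_mul_Lq_of_nonneg Real.HolderConjugate.two_two
    (ae_of_all μ fun a => Real.sqrt_nonneg (f a)) (ae_of_all μ fun a => Real.sqrt_nonneg (g a))
    (by simpa using memLp_two_sqrt hf₀ hf) (by simpa using memLp_two_sqrt hg₀ hg)
  have integral_sqrt_rpow_two {h : α → ℝ} (h₀ : 0 ≤ᵐ[μ] h) :
      ∫ a, √(h a) ^ (2 : ℝ) ∂μ = ∫ a, h a ∂μ :=
    integral_congr_ae (h₀.mono fun a ha => by simp only [Real.rpow_two, Real.sq_sqrt ha])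
  have hF := integral_nonneg_of_ae hf₀
  have hG := integral_nonneg_of_ae hg₀
  rw [integral_sqrt_rpow_two hf₀, integral_sqrt_rpow_two hg₀, ← Real.sqrt_eq_rpow,
    ← Real.sqrt_eq_rpow, ← Real.sqrt_mul hF] at holder
  rw [integral_congr_ae (hf₀.mono fun a ha => Real.sqrt_mul ha (g a))]
  exact (Real.le_sqrt (integral_nonneg fun a => by positivity) (mul_nonneg hF hG)).1 holder

theorem MeasureTheory.Integrable.abs_pow_of_le [IsFiniteMeasure μ] {f : α → ℝ}
    (hf : AEStronglyMeasurable f μ) {m N : ℕ} (hmN : m ≤ N)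
    (hN : Integrable (fun a => |f a| ^ N) μ) : Integrable (fun a => |f a| ^ m) μ := by
  refine ((integrable_const 1).add hN).mono' (hf.norm.pow m) (ae_of_all μ fun a => ?_)
  rw [Real.norm_of_nonneg (by positivity), Pi.add_apply]
  rcases le_total |f a| 1 with h | h
  · linarith [pow_le_one₀ (abs_nonneg (f a)) h (n := m), pow_nonneg (abs_nonneg (f a)) N]
  · linarith [pow_le_pow_right₀ h hmN]

end Integration

section ThetaFun

variable (μ : Measure ℝ) [IsFiniteMeasure μ]

theorem im_inv_I_mul_sub_ofReal (y t : ℝ) :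
    (Complex.I * y - t)⁻¹.im = -y / (y ^ 2 + t ^ 2) := by
  rw [Complex.inv_im, Complex.normSq_apply]
  simp only [Complex.sub_re, Complex.sub_im, Complex.mul_re, Complex.mul_im, Complex.I_re,
    Complex.I_im, Complex.ofReal_re, Complex.ofReal_im]
  ring_nf

theorem integrable_inv_I_mul_sub_ofReal {y : ℝ} (hy : y ≠ 0) :
    Integrable (fun t : ℝ => (Complex.I * y - t)⁻¹) μ := by
  refine Integrable.of_bound (by fun_prop) |y|⁻¹ (ae_of_all μ fun t => ?_)
  rw [norm_inv]
  refine inv_anti₀ (abs_pos.2 hy) ?_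
  simpa using Complex.abs_im_le_norm (Complex.I * y - t)

theorem thetaFun_eq_integral (y : ℝ) : thetaFun μ y = ∫ t, y ^ 2 / (y ^ 2 + t ^ 2) ∂μ := by
  rcases eq_or_ne y 0 with rfl | hy
  · simp [thetaFun]
  rw [thetaFun, cauchyTransform, ← RCLike.im_eq_complex_im,
    ← integral_im (integrable_inv_I_mul_sub_ofReal μ hy), ← integral_const_mul, ← integral_neg]
  refine integral_congr_ae (ae_of_all μ fun t => ?_)
  simp only [RCLike.im_eq_complex_im, im_inv_I_mul_sub_ofReal]
  ring

theorem hasDerivAt_sq_div_sq_add_sq (t : ℝ) {x : ℝ} (hx : x ≠ 0) :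
    HasDerivAt (fun x => x ^ 2 / (x ^ 2 + t ^ 2)) (2 * x * t ^ 2 / (x ^ 2 + t ^ 2) ^ 2) x := by
  refine ((hasDerivAt_pow 2 x).div ((hasDerivAt_pow 2 x).add_const (t ^ 2))
    (by positivity)).congr_deriv ?_
  norm_num
  ring

theorem two_mul_mul_sq_div_sq_add_sq_sq_le (t : ℝ) {x : ℝ} (hx : 0 < x) :
    2 * x * t ^ 2 / (x ^ 2 + t ^ 2) ^ 2 ≤ 1 / (2 * x) := by
  rw [div_le_div_iff₀ (by positivity) (by positivity)]
  nlinarith [sq_nonneg (x ^ 2 - t ^ 2)]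

theorem integrable_two_mul_mul_sq_div_sq_add_sq_sq {y : ℝ} (hy : 0 < y) :
    Integrable (fun t => 2 * y * t ^ 2 / (y ^ 2 + t ^ 2) ^ 2) μ := by
  refine Integrable.of_bound (by fun_prop : Measurable _).aestronglyMeasurable (1 / (2 * y))
    (ae_of_all μ fun t => ?_)
  rw [Real.norm_of_nonneg (by positivity)]
  exact two_mul_mul_sq_div_sq_add_sq_sq_le t hy

theorem hasDerivAt_integral_sq_div_sq_add_sq {y : ℝ} (hy : 0 < y) :
    HasDerivAt (fun x => ∫ t, x ^ 2 / (x ^ 2 + t ^ 2) ∂μ)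
      (∫ t, 2 * y * t ^ 2 / (y ^ 2 + t ^ 2) ^ 2 ∂μ) y := by
  have hs : Set.Ioi (y / 2) ∈ nhds y := Ioi_mem_nhds (by linarith)
  refine (hasDerivAt_integral_of_dominated_loc_of_deriv_le
    (F := fun x t => x ^ 2 / (x ^ 2 + t ^ 2)) (F' := fun x t => 2 * x * t ^ 2 / (x ^ 2 + t ^ 2) ^ 2)
    (bound := fun _ => 1 / y) hs
    (Eventually.of_forall fun x => (by fun_prop : Measurable _).aestronglyMeasurable) ?_
    (by fun_prop : Measurable _).aestronglyMeasurable ?_ (integrable_const _) ?_).2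
  · refine Integrable.of_bound (by fun_prop : Measurable _).aestronglyMeasurable 1
      (ae_of_all μ fun t => ?_)
    rw [Real.norm_of_nonneg (by positivity)]
    exact div_le_one_of_le₀ (by nlinarith) (by positivity)
  · refine ae_of_all μ fun t x (hx : y / 2 < x) => ?_
    have hx₀ : 0 < x := by linarith
    rw [Real.norm_of_nonneg (by positivity)]
    calc _ ≤ 1 / (2 * x) := two_mul_mul_sq_div_sq_add_sq_sq_le t hx₀
      _ ≤ 1 / y := by gcongr; linarith
  · exact ae_of_all μ fun t x (hx : y / 2 < x) =>
      hasDerivAt_sq_div_sq_add_sq t (by linarith)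

end ThetaFun

theorem absMoment_nonneg (μ : Measure ℝ) (k : ℕ) : 0 ≤ absMoment μ k :=
  integral_nonneg fun t => by positivity

theorem sq_absMoment_le_integral_mul (μ : Measure ℝ) [IsFiniteMeasure μ] {k : ℕ} (hk : 1 ≤ k)
    (hmom : Integrable (fun t : ℝ => |t| ^ (2 * (k + 1))) μ) {y : ℝ} (hy : 0 < y) :
    absMoment μ k ^ 2 ≤ (∫ t, 2 * y * t ^ 2 / (y ^ 2 + t ^ 2) ^ 2 ∂μ) *
      ((absMoment μ (2 * (k - 1)) * y ^ 4 + 2 * absMoment μ (2 * k) * y ^ 2 +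
        absMoment μ (2 * (k + 1))) / (2 * y)) := by
  obtain ⟨j, rfl⟩ : ∃ j, k = j + 1 := ⟨k - 1, by omega⟩
  simp only [Nat.add_sub_cancel]
  have moment {m : ℕ} (hm : m ≤ 2 * (j + 1 + 1)) : Integrable (fun t : ℝ => |t| ^ m) μ :=
    hmom.abs_pow_of_le aestronglyMeasurable_id hm
  set g : ℝ → ℝ := fun t => |t| ^ (2 * j) * (y ^ 2 + t ^ 2) ^ 2 / (2 * y)
  have hg_eq : g = fun t => (|t| ^ (2 * j) * y ^ 4 + 2 * |t| ^ (2 * (j + 1)) * y ^ 2 +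
      |t| ^ (2 * (j + 1 + 1))) / (2 * y) := by
    ext t
    simp only [g, ← sq_abs t]
    ring
  have h₀ := (moment (m := 2 * j) (by omega)).mul_const (y ^ 4)
  have h₁ := ((moment (m := 2 * (j + 1)) (by omega)).const_mul 2).mul_const (y ^ 2)
  have hg : Integrable g μ := by
    rw [hg_eq]
    exact ((h₀.fun_add h₁).fun_add hmom).div_const _
  have hg_integral : ∫ t, g t ∂μ = (absMoment μ (2 * j) * y ^ 4 +
      2 * absMoment μ (2 * (j + 1)) * y ^ 2 + absMoment μ (2 * (j + 1 + 1))) / (2 * y) := by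
    rw [hg_eq, integral_div, integral_add (h₀.fun_add h₁) hmom, integral_add h₀ h₁,
      integral_mul_const, integral_mul_const, integral_const_mul]
    rfl
  have sqrt_mul_g (t : ℝ) : √(2 * y * t ^ 2 / (y ^ 2 + t ^ 2) ^ 2 * g t) = |t| ^ (j + 1) := by
    rw [← Real.sqrt_sq (by positivity : 0 ≤ |t| ^ (j + 1))]
    congr 1
    have : y ^ 2 + t ^ 2 ≠ 0 := by positivity
    simp only [g]
    field_simp
    rw [← sq_abs t]
    ring
  calc absMoment μ (j + 1) ^ 2
      = (∫ t, √(2 * y * t ^ 2 / (y ^ 2 + t ^ 2) ^ 2 * g t) ∂μ) ^ 2 := by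
        simp only [sqrt_mul_g]; rfl
    _ ≤ _ := sq_integral_sqrt_mul_le (ae_of_all μ fun t => by positivity)
        (ae_of_all μ fun t => by positivity) (integrable_two_mul_mul_sq_div_sq_add_sq_sq μ hy) hg
    _ = _ := by rw [hg_integral]

theorem theta_deriv_ge_general (μ : Measure ℝ) [IsFiniteMeasure μ]
    (k : ℕ) (hk : 1 ≤ k)
    (hmom : Integrable (fun t : ℝ => |t| ^ (2 * (k + 1))) μ)
    (y : ℝ) (hy : 0 < y) :
    HasDerivAt (thetaFun μ) (∫ t : ℝ, 2 * y * t ^ 2 / (y ^ 2 + t ^ 2) ^ 2 ∂μ) y ∧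
    2 * absMoment μ k ^ 2 * y /
        (absMoment μ (2 * (k - 1)) * y ^ 4 + 2 * absMoment μ (2 * k) * y ^ 2 +
          absMoment μ (2 * (k + 1))) ≤
      ∫ t : ℝ, 2 * y * t ^ 2 / (y ^ 2 + t ^ 2) ^ 2 ∂μ := by
  refine ⟨funext (thetaFun_eq_integral μ) ▸ hasDerivAt_integral_sq_div_sq_add_sq μ hy, ?_⟩
  have := absMoment_nonneg μ (2 * (k - 1))
  have := absMoment_nonneg μ (2 * k)
  have := absMoment_nonneg μ (2 * (k + 1))
  refine div_le_of_le_mul₀ (by positivity) (integral_nonneg fun t => by positivity) ?_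
  have cauchy_schwarz := sq_absMoment_le_integral_mul μ hk hmom hy
  rw [mul_div_assoc', le_div_iff₀ (by positivity)] at cauchy_schwarz
  linarith

/-- For a nonzero finite Borel measure `μ` on `ℝ` with finite absolute moment
of order `2(k+1)` (`k ≥ 1`), and every `y > 0`, the derivative of `θ_μ` equals
`∫ 2yt²/(y²+t²)² dμ(t)` and is bounded below by
`2·𝔞_k(μ)²·y / (𝔞_{2(k−1)}(μ)·y⁴ + 2·𝔞_{2k}(μ)·y² + 𝔞_{2(k+1)}(μ))`. -/
theorem theta_deriv_ge (μ : Measure ℝ) [IsFiniteMeasure μ] (hμ : μ ≠ 0)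
    (k : ℕ) (hk : 1 ≤ k)
    (hmom : Integrable (fun t : ℝ => |t| ^ (2 * (k + 1))) μ)
    (y : ℝ) (hy : 0 < y) :
    HasDerivAt (thetaFun μ) (∫ t : ℝ, 2 * y * t ^ 2 / (y ^ 2 + t ^ 2) ^ 2 ∂μ) y ∧
    2 * absMoment μ k ^ 2 * y /
        (absMoment μ (2 * (k - 1)) * y ^ 4 + 2 * absMoment μ (2 * k) * y ^ 2 +
          absMoment μ (2 * (k + 1))) ≤
      ∫ t : ℝ, 2 * y * t ^ 2 / (y ^ 2 + t ^ 2) ^ 2 ∂μ :=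
  theta_deriv_ge_general μ k hk hmom y hy
end

section
/- Let μ be a Borel probability measure on ℝ, let k ≥ 1 be an integer, assume 𝔞_{2(k+1)}(μ) < ∞ and 𝔞_{2k}(μ) > 0, and set ρ := (𝔞_{2(k+1)}(μ)·𝔞_{2(k−1)}(μ)/𝔞_{2k}(μ)² − 1)^{−1/2}. If 𝔞_{2(k+1)}(μ)·𝔞_{2(k−1)}(μ) > 𝔞_{2k}(μ)², then μ({0}) ≤ 1 − (𝔞_k(μ)²/𝔞_{2k}(μ))·ρ·(π/2 − arctan ρ); if 𝔞_{2(k+1)}(μ)·𝔞_{2(k−1)}(μ) = 𝔞_{2k}(μ)², then μ({0}) ≤ 1 − 𝔞_k(μ)²/𝔞_{2k}(μ). -/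
open MeasureTheory Real

/-- The quantity `ρ = (𝔞_{2(k+1)}·𝔞_{2(k−1)}/𝔞_{2k}² − 1)^{−1/2}`. -/
noncomputable def momentRho (μ : Measure ℝ) (k : ℕ) : ℝ :=
  (Real.sqrt (absMoment μ (2 * (k + 1)) * absMoment μ (2 * (k - 1)) /
    absMoment μ (2 * k) ^ 2 - 1))⁻¹

lemma absMoment_integrable_of_le {μ : Measure ℝ} [IsProbabilityMeasure μ] {m n : ℕ}
    (hmn : m ≤ n) (h : Integrable (fun t : ℝ => |t| ^ n) μ) :
    Integrable (fun t : ℝ => |t| ^ m) μ := by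
  refine Integrable.mono' ((integrable_const (1 : ℝ)).add h)
    ((measurable_abs.pow_const m).aestronglyMeasurable) (ae_of_all _ fun t => ?_)
  rw [Real.norm_of_nonneg (pow_nonneg (abs_nonneg t) m)]
  show |t| ^ m ≤ 1 + |t| ^ n
  rcases le_total (|t|) 1 with ht | ht
  · have h1 : |t| ^ m ≤ 1 := pow_le_one₀ (abs_nonneg t) ht
    have h2 : (0:ℝ) ≤ |t| ^ n := pow_nonneg (abs_nonneg t) n
    linarith
  · have h1 : |t| ^ m ≤ |t| ^ n := pow_le_pow_right₀ ht hmn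
    linarith

/-- The core Cauchy–Schwarz bound: `μ({0}) ≤ 1 - 𝔞_k² / 𝔞_{2k}`. -/
lemma atom_bound_core (μ : Measure ℝ) [IsProbabilityMeasure μ]
    (k : ℕ) (hk : 1 ≤ k)
    (hmom : Integrable (fun t : ℝ => |t| ^ (2 * (k + 1))) μ)
    (hpos : 0 < absMoment μ (2 * k)) :
    (μ {0}).toReal ≤ 1 - absMoment μ k ^ 2 / absMoment μ (2 * k) := by
  set f : ℝ → ℝ := Set.indicator ({0}ᶜ : Set ℝ) (fun _ => (1:ℝ)) with hf_def
  set g : ℝ → ℝ := fun t => |t| ^ k with hg_def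
  have hmeas0 : MeasurableSet ({0}ᶜ : Set ℝ) := (measurableSet_singleton 0).compl
  have hf_meas : Measurable f := (measurable_const.indicator hmeas0)
  have hg_meas : Measurable g := measurable_abs.pow_const k
  have hg0 : g 0 = 0 := by
    simp [hg_def, zero_pow (by omega : k ≠ 0)]
  have hfg : ∀ t, f t * g t = g t := by
    intro t
    by_cases ht : t = 0
    · subst ht; simp [hg0]
    · simp [hf_def, Set.indicator_of_mem (by simpa using ht : t ∈ ({0}ᶜ : Set ℝ))]
  -- integrability
  have hint2k : Integrable (fun t : ℝ => |t| ^ (2 * k)) μ :=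
    absMoment_integrable_of_le (by omega) hmom
  have hintk : Integrable (fun t : ℝ => |t| ^ k) μ :=
    absMoment_integrable_of_le (by omega) hmom
  have hg_sq : (fun t : ℝ => g t ^ 2) = fun t : ℝ => |t| ^ (2 * k) := by
    funext t; rw [hg_def]; rw [← pow_mul, mul_comm]
  -- Memℒp facts
  have hf_mem : MemLp f (ENNReal.ofReal 2) μ := by
    refine MemLp.of_bound hf_meas.aestronglyMeasurable 1 (ae_of_all _ fun t => ?_)
    rw [hf_def]
    by_cases ht : t ∈ ({0}ᶜ : Set ℝ) <;>
      simp [Set.indicator_of_mem, Set.indicator_of_notMem, ht]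
  have hg_mem : MemLp g (ENNReal.ofReal 2) μ := by
    have : MemLp g 2 μ := by
      rw [memLp_two_iff_integrable_sq hg_meas.aestronglyMeasurable, hg_sq]
      exact hint2k
    simpa [ENNReal.ofReal_ofNat] using this
  -- Cauchy–Schwarz (Hölder with p = q = 2)
  have hCS := integral_mul_le_Lp_mul_Lq_of_nonneg
    (⟨by norm_num, by norm_num, by norm_num⟩ : (2:ℝ).HolderConjugate 2)
    (ae_of_all μ fun t => Set.indicator_nonneg (fun _ _ => zero_le_one) t)
    (ae_of_all μ fun t => pow_nonneg (abs_nonneg t) k) hf_mem hg_mem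
  -- rewrite real powers
  have hrw1 : ∫ t, f t ^ (2:ℝ) ∂μ = (μ ({0}ᶜ)).toReal := by
    have : ∀ t, f t ^ (2:ℝ) = f t := by
      intro t
      rw [hf_def]
      by_cases ht : t ∈ ({0}ᶜ : Set ℝ) <;>
        simp [Set.indicator_of_mem, Set.indicator_of_notMem, ht, Real.rpow_natCast]
    rw [show (fun t => f t ^ (2:ℝ)) = f from funext this]
    rw [hf_def, integral_indicator_const _ hmeas0]
    simp [measureReal_def]
  have hrw2 : ∫ t, g t ^ (2:ℝ) ∂μ = absMoment μ (2 * k) := by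
    have : ∀ t, g t ^ (2:ℝ) = |t| ^ (2 * k) := by
      intro t
      rw [show (2:ℝ) = ((2:ℕ):ℝ) by norm_num, Real.rpow_natCast, ← congrFun hg_sq t]
    rw [show (fun t => g t ^ (2:ℝ)) = fun t => |t| ^ (2*k) from funext this]
    rfl
  have hrw0 : ∫ t, f t * g t ∂μ = absMoment μ k := by
    rw [show (fun t => f t * g t) = g from funext hfg]; rfl
  rw [hrw0, hrw1, hrw2] at hCS
  -- square both sides
  set c : ℝ := (μ ({0}ᶜ)).toReal with hc_def
  have hc_nonneg : 0 ≤ c := ENNReal.toReal_nonneg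
  have hsq : absMoment μ k ^ 2 ≤ c * absMoment μ (2 * k) := by
    have h1 : absMoment μ k ≤ c ^ ((1:ℝ)/2) * absMoment μ (2*k) ^ ((1:ℝ)/2) := hCS
    have hA_nonneg : 0 ≤ absMoment μ k :=
      integral_nonneg fun t => pow_nonneg (abs_nonneg t) k
    have h2 : absMoment μ k ^ 2 ≤ (c ^ ((1:ℝ)/2) * absMoment μ (2*k) ^ ((1:ℝ)/2)) ^ 2 :=
      pow_le_pow_left₀ hA_nonneg h1 2
    calc absMoment μ k ^ 2 ≤ (c ^ ((1:ℝ)/2) * absMoment μ (2*k) ^ ((1:ℝ)/2)) ^ 2 := h2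
      _ = (c ^ ((1:ℝ)/2)) ^ 2 * (absMoment μ (2*k) ^ ((1:ℝ)/2)) ^ 2 := by ring
      _ = c * absMoment μ (2 * k) := by
          rw [← Real.rpow_natCast (c ^ ((1:ℝ)/2)) 2, ← Real.rpow_mul hc_nonneg,
            ← Real.rpow_natCast (absMoment μ (2*k) ^ ((1:ℝ)/2)) 2,
            ← Real.rpow_mul hpos.le]
          norm_num
  have hdiv : absMoment μ k ^ 2 / absMoment μ (2 * k) ≤ c :=
    (div_le_iff₀ hpos).mpr hsq
  -- relate c to μ {0}
  have hcompl : c = 1 - (μ {0}).toReal := by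
    rw [hc_def, measure_compl (measurableSet_singleton 0) (measure_ne_top μ _),
      measure_univ, ENNReal.toReal_sub_of_le prob_le_one ENNReal.one_ne_top]
    simp
  linarith [hcompl ▸ hdiv]

/-- Bound on the atom at zero of a Borel probability measure in terms of its
absolute moments of orders `k`, `2(k−1)`, `2k`, `2(k+1)`. -/
theorem atom_bound_via_moments (μ : Measure ℝ) [IsProbabilityMeasure μ]
    (k : ℕ) (hk : 1 ≤ k)
    (hmom : Integrable (fun t : ℝ => |t| ^ (2 * (k + 1))) μ)
    (hpos : 0 < absMoment μ (2 * k)) :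
    (absMoment μ (2 * (k + 1)) * absMoment μ (2 * (k - 1)) > absMoment μ (2 * k) ^ 2 →
      (μ {0}).toReal ≤ 1 - absMoment μ k ^ 2 / absMoment μ (2 * k) *
        (momentRho μ k * (π / 2 - Real.arctan (momentRho μ k)))) ∧
    (absMoment μ (2 * (k + 1)) * absMoment μ (2 * (k - 1)) = absMoment μ (2 * k) ^ 2 →
      (μ {0}).toReal ≤ 1 - absMoment μ k ^ 2 / absMoment μ (2 * k)) := by
  have hcore := atom_bound_core μ k hk hmom hpos
  refine ⟨fun _ => ?_, fun _ => hcore⟩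
  set ρ := momentRho μ k with hρ_def
  have hρ_nonneg : 0 ≤ ρ := by
    rw [hρ_def, momentRho]
    exact inv_nonneg.mpr (Real.sqrt_nonneg _)
  have hfac_nonneg : 0 ≤ ρ * (π / 2 - Real.arctan ρ) :=
    mul_nonneg hρ_nonneg (by linarith [Real.arctan_lt_pi_div_two ρ])
  have hfac_le_one : ρ * (π / 2 - Real.arctan ρ) ≤ 1 := by
    rcases eq_or_lt_of_le hρ_nonneg with h0 | h0
    · rw [← h0]; norm_num
    · have hinv : Real.arctan ρ⁻¹ = π / 2 - Real.arctan ρ := Real.arctan_inv_of_pos h0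
      have harctan_le : Real.arctan ρ⁻¹ ≤ ρ⁻¹ := by
        have h1 : 0 ≤ Real.arctan ρ⁻¹ := by
          rw [← Real.arctan_zero]
          exact Real.arctan_strictMono.monotone (inv_nonneg.mpr hρ_nonneg)
        have h2 : Real.arctan ρ⁻¹ < π / 2 := Real.arctan_lt_pi_div_two _
        have := Real.le_tan h1 h2
        rwa [Real.tan_arctan] at this
      calc ρ * (π / 2 - Real.arctan ρ) = ρ * Real.arctan ρ⁻¹ := by rw [hinv]
        _ ≤ ρ * ρ⁻¹ := by
            exact mul_le_mul_of_nonneg_left harctan_le hρ_nonneg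
        _ = 1 := mul_inv_cancel₀ (ne_of_gt h0)
  have hA_nonneg : 0 ≤ absMoment μ k ^ 2 / absMoment μ (2 * k) :=
    div_nonneg (sq_nonneg _) hpos.le
  have : absMoment μ k ^ 2 / absMoment μ (2 * k) * (ρ * (π / 2 - Real.arctan ρ)) ≤
      absMoment μ k ^ 2 / absMoment μ (2 * k) := by
    calc absMoment μ k ^ 2 / absMoment μ (2 * k) * (ρ * (π / 2 - Real.arctan ρ))
        ≤ absMoment μ k ^ 2 / absMoment μ (2 * k) * 1 :=
          mul_le_mul_of_nonneg_left hfac_le_one hA_nonneg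
      _ = absMoment μ k ^ 2 / absMoment μ (2 * k) := mul_one _
  linarith
end

section
/- Let μ be a Borel probability measure on ℝ of regular type: there are c ≥ 0, β ∈ (0,1] and r₀ > 0 such that μ([−r, r]) − μ({0}) ≤ c·r^β for all 0 < r < r₀. Then, for all y with 0 < y < r₀^{(2+β)/2}, one has θ_μ(y) − μ({0}) ≤ (c + 1 − μ({0}))·y^{2β/(2+β)}. -/
open MeasureTheory Filter Real

theorem theta_eq_integral (μ : Measure ℝ) [IsProbabilityMeasure μ] (y : ℝ) (hy : 0 < y) :
    thetaFun μ y = ∫ t : ℝ, y^2 / (t^2 + y^2) ∂μ := by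
  have hfi : Integrable (fun t : ℝ => (Complex.I * (y:ℂ) - t)⁻¹) μ := by
    have hcont : Continuous fun t : ℝ => (Complex.I * (y:ℂ) - t)⁻¹ := by
      apply Continuous.inv₀ (by continuity)
      intro t h
      have := congrArg Complex.im h
      simp at this
      linarith
    apply (integrable_const (y⁻¹)).mono' hcont.aestronglyMeasurable
    filter_upwards with t
    rw [norm_inv]
    have hz : y ≤ ‖Complex.I * (y:ℂ) - t‖ := by
      calc y = |(Complex.I * (y:ℂ) - t).im| := by simp [abs_of_pos hy]
      _ ≤ ‖Complex.I * (y:ℂ) - t‖ := Complex.abs_im_le_norm _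
      _ = _ := rfl
    exact inv_anti₀ hy hz
  have him : ∀ t : ℝ, ((Complex.I * y - (t:ℂ))⁻¹).im = -y / (t^2 + y^2) := by
    intro t
    rw [Complex.inv_im]
    have h1 : (Complex.I * y - (t:ℂ)).im = y := by simp
    have h2 : Complex.normSq (Complex.I * y - (t:ℂ)) = t^2 + y^2 := by
      simp [Complex.normSq_apply]; ring
    rw [h1, h2]
  have hint_im : (∫ t : ℝ, (Complex.I * (y:ℂ) - t)⁻¹ ∂μ).im
      = ∫ t : ℝ, ((Complex.I * (y:ℂ) - t)⁻¹).im ∂μ := by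
    have := Complex.imCLM.integral_comp_comm hfi
    simpa using this.symm
  unfold thetaFun cauchyTransform
  rw [hint_im]
  simp_rw [him]
  rw [← integral_const_mul, ← integral_neg]
  congr 1
  ext t
  have hpos : (0:ℝ) < t^2 + y^2 := by positivity
  field_simp

/-- For a Borel probability measure `μ` of regular type with data `c`, `β`, `r₀`,
one has `θ_μ(y) − μ({0}) ≤ (c + 1 − μ({0}))·y^{2β/(2+β)}` for all `0 < y < r₀^{(2+β)/2}`. -/
theorem theta_sub_atom_le_of_regular_type (μ : Measure ℝ) [IsProbabilityMeasure μ]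
    (c β r₀ : ℝ) (hc : 0 ≤ c) (hβ : β ∈ Set.Ioc (0 : ℝ) 1) (hr₀ : 0 < r₀)
    (hreg : ∀ r : ℝ, 0 < r → r < r₀ →
      (μ (Set.Icc (-r) r)).toReal - (μ {0}).toReal ≤ c * r ^ β)
    (y : ℝ) (hy : 0 < y) (hy' : y < r₀ ^ ((2 + β) / 2)) :
    thetaFun μ y - (μ {0}).toReal ≤
      (c + 1 - (μ {0}).toReal) * y ^ (2 * β / (2 + β)) := by
  obtain ⟨hβ0, hβ1⟩ := hβ
  have h2β : (0:ℝ) < 2 + β := by linarith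
  set r : ℝ := y ^ (2 / (2 + β)) with hrdef
  have hrpos : 0 < r := Real.rpow_pos_of_pos hy _
  have hepos : 0 < y ^ (2 * β / (2 + β)) := Real.rpow_pos_of_pos hy _
  -- r < r₀
  have hrr₀ : r < r₀ := by
    have h := Real.rpow_lt_rpow hy.le hy' (by positivity : (0:ℝ) < 2 / (2 + β))
    have heq : (r₀ ^ ((2+β)/2)) ^ (2/(2+β)) = r₀ := by
      rw [← Real.rpow_mul hr₀.le]
      rw [show ((2+β)/2) * (2/(2+β)) = 1 by field_simp]
      exact Real.rpow_one r₀
    rwa [heq] at h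
  -- exponent identities
  have hrβ : r ^ β = y ^ (2 * β / (2 + β)) := by
    rw [hrdef, ← Real.rpow_mul hy.le]
    congr 1
    field_simp
  have hy2r2 : y^2 / r^2 = y ^ (2 * β / (2 + β)) := by
    rw [hrdef, ← Real.rpow_natCast (y ^ (2/(2+β))) 2, ← Real.rpow_mul hy.le,
      ← Real.rpow_natCast y 2, ← Real.rpow_sub hy]
    congr 1
    push_cast
    field_simp
    ring
  -- f and its integrability
  set f : ℝ → ℝ := fun t => y^2 / (t^2 + y^2) with hfdef
  have hf1 : ∀ t, f t ≤ 1 := by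
    intro t
    rw [hfdef]
    rw [div_le_one (by positivity)]
    nlinarith [sq_nonneg t]
  have hf0 : ∀ t, 0 ≤ f t := by intro t; rw [hfdef]; positivity
  have hfcont : Continuous f := by
    apply continuous_const.div (by continuity)
    intro t; positivity
  have hfint : Integrable f μ := by
    apply (integrable_const (1:ℝ)).mono' hfcont.aestronglyMeasurable
    filter_upwards with t
    rw [Real.norm_eq_abs, abs_of_nonneg (hf0 t)]
    exact hf1 t
  -- sets
  set A : Set ℝ := Set.Icc (-r) r \ {0} with hAdef
  set B : Set ℝ := (Set.Icc (-r) r)ᶜ with hBdef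
  have h0Icc : (0:ℝ) ∈ Set.Icc (-r) r := ⟨by linarith, hrpos.le⟩
  have hAmeas : MeasurableSet A := measurableSet_Icc.diff (measurableSet_singleton 0)
  have hBmeas : MeasurableSet B := measurableSet_Icc.compl
  have hsetsplit : ({0}ᶜ : Set ℝ) = A ∪ B := by
    ext t
    simp only [hAdef, hBdef, Set.mem_compl_iff, Set.mem_singleton_iff, Set.mem_union,
      Set.mem_diff]
    constructor
    · intro h
      by_cases ht : t ∈ Set.Icc (-r) r
      · exact Or.inl ⟨ht, h⟩
      · exact Or.inr ht
    · rintro (⟨_, h⟩ | h)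
      · exact h
      · intro h0; subst h0; exact h h0Icc
  have hdisj : Disjoint A B := disjoint_compl_right.mono_left Set.diff_subset
  -- theta = ∫ f, split over {0} and its complement
  have hsplit : thetaFun μ y - (μ {0}).toReal = (∫ t in A, f t ∂μ) + ∫ t in B, f t ∂μ := by
    rw [theta_eq_integral μ y hy]
    have h1 : ∫ t : ℝ, f t ∂μ = (∫ t in ({0}:Set ℝ), f t ∂μ) + ∫ t in ({0}ᶜ : Set ℝ), f t ∂μ :=
      (integral_add_compl (measurableSet_singleton 0) hfint).symm
    have h2 : ∫ t in ({0}:Set ℝ), f t ∂μ = (μ {0}).toReal := by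
      rw [integral_singleton]
      have : f 0 = 1 := by rw [hfdef]; simp [hy.ne']
      rw [this]; simp; rfl
    have h3 : ∫ t in ({0}ᶜ : Set ℝ), f t ∂μ = (∫ t in A, f t ∂μ) + ∫ t in B, f t ∂μ := by
      rw [hsetsplit]
      exact setIntegral_union hdisj hBmeas hfint.integrableOn hfint.integrableOn
    rw [h1, h2, h3]; ring
  -- bound on A
  have hμA : (μ A).toReal = (μ (Set.Icc (-r) r)).toReal - (μ {0}).toReal := by
    rw [hAdef, measure_diff (Set.singleton_subset_iff.mpr h0Icc)
      (measurableSet_singleton 0).nullMeasurableSet (measure_ne_top μ _)]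
    rw [ENNReal.toReal_sub_of_le (measure_mono (Set.singleton_subset_iff.mpr h0Icc))
      (measure_ne_top μ _)]
  have hA : ∫ t in A, f t ∂μ ≤ c * y ^ (2 * β / (2 + β)) := by
    have hb : ‖∫ t in A, f t ∂μ‖ ≤ 1 * (μ A).toReal := by
      apply norm_setIntegral_le_of_norm_le_const_ae' (measure_lt_top μ A)
      filter_upwards with t _
      rw [Real.norm_eq_abs, abs_of_nonneg (hf0 t)]
      exact hf1 t
    calc ∫ t in A, f t ∂μ ≤ ‖∫ t in A, f t ∂μ‖ := le_abs_self _
    _ ≤ 1 * (μ A).toReal := hb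
    _ = (μ (Set.Icc (-r) r)).toReal - (μ {0}).toReal := by rw [one_mul, hμA]
    _ ≤ c * r ^ β := hreg r hrpos hrr₀
    _ = c * y ^ (2 * β / (2 + β)) := by rw [hrβ]
  -- bound on B
  have hμB : (μ B).toReal ≤ 1 - (μ {0}).toReal := by
    have h1 : (μ B).toReal = 1 - (μ (Set.Icc (-r) r)).toReal := by
      rw [hBdef, measure_compl measurableSet_Icc (measure_ne_top μ _)]
      rw [ENNReal.toReal_sub_of_le (measure_mono (Set.subset_univ _)) (measure_ne_top μ _)]
      simp
    have h2 : (μ {0}).toReal ≤ (μ (Set.Icc (-r) r)).toReal := by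
      apply ENNReal.toReal_mono (measure_ne_top μ _)
      exact measure_mono (Set.singleton_subset_iff.mpr h0Icc)
    linarith
  have hB : ∫ t in B, f t ∂μ ≤ y ^ (2 * β / (2 + β)) * (1 - (μ {0}).toReal) := by
    have hb : ‖∫ t in B, f t ∂μ‖ ≤ (y^2/r^2) * (μ B).toReal := by
      apply norm_setIntegral_le_of_norm_le_const_ae' (measure_lt_top μ B)
      filter_upwards with t ht
      rw [Real.norm_eq_abs, abs_of_nonneg (hf0 t)]
      have htr : r^2 ≤ t^2 := by
        rw [hBdef, Set.mem_compl_iff, Set.mem_Icc, not_and_or] at ht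
        rcases ht with h | h
        · push_neg at h; nlinarith
        · push_neg at h; nlinarith
      rw [hfdef]
      rw [div_le_div_iff₀ (by positivity) (by positivity)]
      nlinarith [sq_nonneg y, sq_nonneg t]
    calc ∫ t in B, f t ∂μ ≤ ‖∫ t in B, f t ∂μ‖ := le_abs_self _
    _ ≤ (y^2/r^2) * (μ B).toReal := hb
    _ = y ^ (2 * β / (2 + β)) * (μ B).toReal := by rw [hy2r2]
    _ ≤ y ^ (2 * β / (2 + β)) * (1 - (μ {0}).toReal) :=
        mul_le_mul_of_nonneg_left hμB hepos.le
  rw [hsplit]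
  calc (∫ t in A, f t ∂μ) + ∫ t in B, f t ∂μ
      ≤ c * y ^ (2 * β / (2 + β)) + y ^ (2 * β / (2 + β)) * (1 - (μ {0}).toReal) :=
        add_le_add hA hB
    _ = (c + 1 - (μ {0}).toReal) * y ^ (2 * β / (2 + β)) := by ring
end

section
/- Let 𝒟 be a nonempty bounded convex open subset of a complex Banach space (E, ‖·‖), and let h : 𝒟 → 𝒟 be a holomorphic map such that dist(h(𝒟), E ∖ 𝒟) ≥ ε for some ε > 0 and such that ‖(Dh)(w)‖ ≤ M < ∞ for all w ∈ 𝒟. Set q := (1 + ε/diam(𝒟))⁻¹. Then h has a unique fixed point w* ∈ 𝒟, and for every w₀ ∈ h(𝒟) and every integer n ≥ 1, ‖hⁿ(w₀) − w*‖ ≤ (M/ε²)·diam(𝒟)²·‖h(w₀) − w₀‖·q^{n−1}, where hⁿ denotes the n-fold iterate of h. -/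
set_option maxHeartbeats 1600000

open Set Metric Function Finset

namespace EarleHamilton

variable {E : Type*} [NormedAddCommGroup E] [NormedSpace ℂ E]


/-- Test functions: holomorphic maps of `D` into the unit disc vanishing at `x`. -/
def EHS (D : Set E) (x : E) : Set (E → ℂ) :=
  {f | DifferentiableOn ℂ f D ∧ Set.MapsTo f D (Metric.ball (0:ℂ) 1) ∧ f x = 0}

lemma zero_mem_EHS (D : Set E) (x : E) : (fun _ : E => (0:ℂ)) ∈ EHS D x :=
  ⟨differentiableOn_const _, fun _ _ => mem_ball_self one_pos, rfl⟩

instance (D : Set E) (x : E) : Nonempty ↥(EHS D x) := ⟨⟨_, zero_mem_EHS D x⟩⟩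

/-- Based Carathéodory-type gauge. -/
noncomputable def ehG (D : Set E) (x y : E) : ℝ :=
  ⨆ f : ↥(EHS D x), ‖(f : E → ℂ) y‖

lemma ehG_nonneg (D : Set E) (x y : E) : 0 ≤ ehG D x y :=
  Real.iSup_nonneg fun f => norm_nonneg _

lemma ehG_bddAbove (D : Set E) (x y : E) (hy : y ∈ D) :
    BddAbove (range fun f : ↥(EHS D x) => ‖(f : E → ℂ) y‖) := by
  refine ⟨1, ?_⟩
  rintro r ⟨f, rfl⟩
  exact le_of_lt (by simpa using mem_ball_zero_iff.1 (f.2.2.1 hy))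

lemma le_ehG {D : Set E} {x y : E} (hy : y ∈ D) {f : E → ℂ} (hf : f ∈ EHS D x) :
    ‖f y‖ ≤ ehG D x y :=
  le_ciSup (ehG_bddAbove D x y hy) (⟨f, hf⟩ : ↥(EHS D x))

lemma ehG_le {D : Set E} {x y : E} {c : ℝ} (H : ∀ f ∈ EHS D x, ‖f y‖ ≤ c) :
    ehG D x y ≤ c :=
  ciSup_le fun f => H f.1 f.2

/-- Lower bound via a linear functional. -/
lemma norm_le_ehG {D : Set E} {d : ℝ} {x y : E}
    (hlt : ∀ w ∈ D, ‖w - x‖ < d) (hy : y ∈ D) :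
    ‖y - x‖ ≤ d * ehG D x y := by
  have hd : 0 < d := lt_of_le_of_lt (norm_nonneg _) (hlt y hy)
  rcases eq_or_ne y x with rfl | hne
  · simpa using mul_nonneg hd.le (ehG_nonneg D y y)
  obtain ⟨g, hg1, hgx⟩ := exists_dual_vector ℂ (y - x) (norm_ne_zero_iff.2 (sub_ne_zero.2 hne))
  set f : E → ℂ := fun w => (d : ℂ)⁻¹ * g (w - x) with hfdef
  have hfmem : f ∈ EHS D x := by
    refine ⟨?_, ?_, ?_⟩
    · exact (((g.differentiable.comp (differentiable_id.sub_const x)).const_mul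
        _).differentiableOn)
    · intro w hw
      rw [mem_ball_zero_iff]
      have h1 : ‖f w‖ = d⁻¹ * ‖g (w - x)‖ := by
        rw [hfdef]; simp [norm_mul, abs_of_pos hd]
      have h2 : ‖g (w - x)‖ ≤ ‖w - x‖ := by
        calc ‖g (w - x)‖ ≤ ‖g‖ * ‖w - x‖ := g.le_opNorm _
        _ = ‖w - x‖ := by rw [hg1, one_mul]
      have := hlt w hw
      calc ‖f w‖ ≤ d⁻¹ * ‖w - x‖ := by
            rw [h1]; exact mul_le_mul_of_nonneg_left h2 (by positivity)
        _ < d⁻¹ * d := by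
            exact mul_lt_mul_of_pos_left this (by positivity)
        _ = 1 := inv_mul_cancel₀ hd.ne'
    · simp [hfdef]
  have hval : ‖f y‖ = d⁻¹ * ‖y - x‖ := by
    rw [hfdef]; simp [norm_mul, abs_of_pos hd, hgx]
  have := le_ehG hy hfmem
  rw [hval] at this
  calc ‖y - x‖ = d * (d⁻¹ * ‖y - x‖) := by field_simp
  _ ≤ d * ehG D x y := mul_le_mul_of_nonneg_left this hd.le

/-- Schwarz upper bound for deep points. -/
lemma ehG_le_of_ball {D : Set E} {r : ℝ} {z z' : E} (hr : 0 < r)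
    (hball : ball z r ⊆ D) (hz' : ‖z' - z‖ < r) :
    ehG D z z' ≤ ‖z' - z‖ / r := by
  apply ehG_le
  intro f hf
  rcases eq_or_ne z' z with rfl | hne
  · rw [hf.2.2, norm_zero]; positivity
  set w := z' - z with hw
  have hw0 : 0 < ‖w‖ := by rwa [hw, norm_pos_iff, sub_ne_zero]
  set R := r / ‖w‖ with hR
  have hR1 : 1 < R := (one_lt_div hw0).2 hz'
  have hmapsdom : ∀ lam : ℂ, lam ∈ ball (0:ℂ) R → z + lam • w ∈ D := by
    intro lam hlam
    apply hball
    rw [mem_ball_zero_iff] at hlam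
    rw [mem_ball_iff_norm']
    have : ‖lam • w‖ < R * ‖w‖ := by
      rw [norm_smul]
      exact mul_lt_mul_of_pos_right hlam hw0
    rw [hR, div_mul_cancel₀ _ hw0.ne'] at this
    simpa [norm_sub_rev] using this
  set psi : ℂ → ℂ := fun lam => f (z + lam • w) with hpsi
  have hpsid : DifferentiableOn ℂ psi (ball (0:ℂ) R) := by
    apply hf.1.comp
    · intro lam hlam
      exact ((differentiable_id.smul_const w).const_add z).differentiableAt.differentiableWithinAt
    · intro lam hlam; exact hmapsdom lam hlam
  have hpsi0 : psi 0 = 0 := by simp [hpsi, hf.2.2]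
  have hmapspsi : MapsTo psi (ball (0:ℂ) R) (ball (psi 0) 1) := by
    rw [hpsi0]
    intro lam hlam
    exact hf.2.1 (hmapsdom lam hlam)
  have h1R : (1:ℂ) ∈ ball (0:ℂ) R := by
    rw [mem_ball_zero_iff]; simpa using hR1
  have := Complex.norm_dslope_le_div_of_mapsTo_ball hpsid (hmapspsi.mono_right ball_subset_closedBall) h1R
  have hds : dslope psi 0 1 = psi 1 := by
    rw [dslope_of_ne _ (by norm_num : (1:ℂ) ≠ 0), slope_def_field]
    simp [hpsi0]
  rw [hds] at this
  have hpsi1 : psi 1 = f z' := by simp [hpsi, hw]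
  rw [hpsi1] at this
  calc ‖f z'‖ ≤ 1 / R := this
  _ = ‖z' - z‖ / r := by rw [hR]; field_simp; rfl

lemma le_add_of_forall_pos {a b : ℝ} (H : ∀ κ : ℝ, 0 < κ → a ≤ b + κ) : a ≤ b := by
  by_contra hc
  push_neg at hc
  have := H ((a - b)/2) (by linarith)
  linarith

/-- Key step: one application of `h` contracts the gauge by `(d-ε)/d`, up to a
quadratic error. -/
lemma ehG_step {D : Set E} {h : E → E} {ε d : ℝ}
    (hdiffD : DifferentiableOn ℂ h D)
    (hε : 0 < ε) (h2εd : 2*ε ≤ d)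
    (hball : ∀ x ∈ D, ball (h x) ε ⊆ D)
    (hdiam : ∀ a ∈ D, ∀ b ∈ D, ‖h a - h b‖ ≤ d - 2*ε)
    {z z' : E} (hz : z ∈ D) (hz' : z' ∈ D)
    (hsmall : 2 * ‖h z' - h z‖ < ε) :
    ehG D (h z) (h z') ≤ (d - ε)/d * ehG D z z' + 10 * ‖h z' - h z‖^2 / ε^2 := by
  have hd : 0 < d := by linarith
  have hdε : 0 < d - ε := by linarith
  set t : ℝ := ε / (d - ε) with ht
  have ht0 : 0 < t := by positivity
  have ht1 : t ≤ 1 := by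
    rw [ht, div_le_one hdε]; linarith
  have hq : (d - ε)/d * (1 + t) = 1 := by
    rw [ht]; field_simp; ring
  have hq0 : 0 ≤ (d - ε)/d := by positivity
  have hq1 : (d - ε)/d ≤ 1 := by
    rw [div_le_one hd]; linarith
  -- the dilated map g
  set g : E → E := fun v => h v + (t:ℂ) • (h v - h z) with hg
  have hgz : g z = h z := by simp [hg]
  have hgmaps : MapsTo g D D := by
    intro v hv
    apply hball v hv
    rw [mem_ball_iff_norm']
    have : ‖g v - h v‖ = t * ‖h v - h z‖ := by
      simp [hg, norm_smul, Complex.norm_real, abs_of_pos ht0]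
    rw [norm_sub_rev, this]
    calc t * ‖h v - h z‖ ≤ t * (d - 2*ε) := by
          exact mul_le_mul_of_nonneg_left (hdiam v hv z hz) ht0.le
    _ < ε := by
          rw [ht, div_mul_eq_mul_div, div_lt_iff₀ hdε]
          nlinarith
  have hgdiff : DifferentiableOn ℂ g D := by
    exact hdiffD.add ((hdiffD.sub_const (h z)).const_smul ((t:ℂ)))
  -- main estimate per test function
  apply ehG_le
  intro f hf
  simp only [EHS, Set.mem_setOf_eq] at hf
  set w := h z' - h z with hwdef
  rcases eq_or_ne (h z') (h z) with heq | hne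
  · rw [heq, hf.2.2, norm_zero]
    have := ehG_nonneg D z z'
    positivity
  have hw0 : 0 < ‖w‖ := by rw [hwdef, norm_pos_iff, sub_ne_zero]; exact hne
  set R := ε / ‖w‖ with hR
  have hR2 : 2 < R := by
    rw [hR, lt_div_iff₀ hw0]; linarith
  have hR0 : 0 < R := by linarith
  have hmapsdom : ∀ lam : ℂ, lam ∈ ball (0:ℂ) R → h z + lam • w ∈ D := by
    intro lam hlam
    apply hball z hz
    rw [mem_ball_zero_iff] at hlam
    rw [mem_ball_iff_norm']
    have : ‖lam • w‖ < R * ‖w‖ := by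
      rw [norm_smul]; exact mul_lt_mul_of_pos_right hlam hw0
    rw [hR, div_mul_cancel₀ _ hw0.ne'] at this
    simpa [norm_sub_rev] using this
  set psi : ℂ → ℂ := fun lam => f (h z + lam • w) with hpsi
  have hpsid : DifferentiableOn ℂ psi (ball (0:ℂ) R) := by
    apply hf.1.comp
    · intro lam _
      exact ((differentiable_id.smul_const w).const_add (h z)).differentiableAt.differentiableWithinAt
    · intro lam hlam; exact hmapsdom lam hlam
  have hpsi0 : psi 0 = 0 := by simp [hpsi, hf.2.2]
  have hmapspsi : MapsTo psi (ball (0:ℂ) R) (ball (psi 0) 1) := by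
    rw [hpsi0]
    intro lam hlam
    exact hf.2.1 (hmapsdom lam hlam)
  set psi1 : ℂ → ℂ := dslope psi 0 with hpsi1
  have hpsi1d : DifferentiableOn ℂ psi1 (ball (0:ℂ) R) :=
    (Complex.differentiableOn_dslope (ball_mem_nhds 0 hR0)).2 hpsid
  have hbound1 : ∀ lam ∈ ball (0:ℂ) R, ‖psi1 lam‖ ≤ 1/R := fun lam hlam =>
    Complex.norm_dslope_le_div_of_mapsTo_ball hpsid (hmapspsi.mono_right ball_subset_closedBall) hlam
  set c : ℂ := psi1 0 with hc
  have hcR : ‖c‖ ≤ 1/R := hbound1 0 (mem_ball_self hR0)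
  set psi2 : ℂ → ℂ := dslope psi1 0 with hpsi2
  have hbound2 : ∀ lam ∈ ball (0:ℂ) R, ‖psi2 lam‖ ≤ 2/R^2 := by
    intro lam hlam
    apply le_add_of_forall_pos
    intro κ hκ
    have hmaps2 : MapsTo psi1 (ball (0:ℂ) R) (ball (psi1 0) (2/R + κ*R)) := by
      intro μ hμ
      rw [mem_ball, dist_eq_norm]
      calc ‖psi1 μ - psi1 0‖ ≤ ‖psi1 μ‖ + ‖psi1 0‖ := norm_sub_le _ _
      _ ≤ 1/R + 1/R := add_le_add (hbound1 μ hμ) hcR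
      _ < 2/R + κ*R := by
            have : 0 < κ * R := by positivity
            have h2 : 1/R + 1/R = 2/R := by ring
            linarith [h2]
    have := Complex.norm_dslope_le_div_of_mapsTo_ball hpsi1d (hmaps2.mono_right ball_subset_closedBall) hlam
    calc ‖psi2 lam‖ ≤ (2/R + κ*R)/R := this
    _ = 2/R^2 + κ := by field_simp
  -- expansion identities
  have hexp : ∀ lam : ℂ, psi lam = lam * c + lam^2 * psi2 lam := by
    intro lam
    have e1 : psi lam - psi 0 = (lam - 0) • psi1 lam := (sub_smul_dslope psi 0 lam).symm
    have e2 : psi1 lam - psi1 0 = (lam - 0) • psi2 lam := (sub_smul_dslope psi1 0 lam).symm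
    simp only [sub_zero, smul_eq_mul, hpsi0] at e1 e2
    rw [sub_eq_iff_eq_add] at e2
    rw [e1, e2, ← hc]
    ring
  -- evaluate at 1
  have h1mem : (1:ℂ) ∈ ball (0:ℂ) R := by rw [mem_ball_zero_iff]; simp; linarith
  have hev1 : ‖psi 1 - c‖ ≤ 2/R^2 := by
    have := hexp 1
    rw [this]
    simp only [one_pow, one_mul]
    rw [add_sub_cancel_left]
    exact hbound2 1 h1mem
  -- evaluate at 1 + t
  set τ : ℂ := ((1 + t : ℝ) : ℂ) with hτ
  have hτnorm : ‖τ‖ = 1 + t := by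
    rw [hτ, Complex.norm_real, Real.norm_eq_abs, abs_of_pos (by linarith : (0:ℝ) < 1 + t)]
  have hτmem : τ ∈ ball (0:ℂ) R := by
    rw [mem_ball_zero_iff, hτnorm]; linarith
  have hevτ : ‖psi τ - τ * c‖ ≤ 8/R^2 := by
    have := hexp τ
    rw [this, add_sub_cancel_left]
    rw [norm_mul, norm_pow, hτnorm]
    calc (1+t)^2 * ‖psi2 τ‖ ≤ 4 * (2/R^2) := by
          apply mul_le_mul (by nlinarith) (hbound2 τ hτmem) (norm_nonneg _) (by norm_num)
    _ = 8/R^2 := by ring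
  -- psi τ = f (g z')
  have hgz' : g z' = h z + τ • w := by
    rw [hg, hτ, hwdef]
    have : ((1 + t : ℝ) : ℂ) = 1 + (t:ℂ) := by push_cast; ring
    rw [this, add_smul, one_smul]
    abel
  have hpsiτ : psi τ = f (g z') := by rw [hpsi]; simp only []; rw [hgz']
  -- f ∘ g is a test function based at z
  have hfg : (f ∘ g) ∈ EHS D z := by
    refine ⟨hf.1.comp hgdiff hgmaps, hf.2.1.comp hgmaps, ?_⟩
    simp [Function.comp, hgz, hf.2.2]
  have hfgle : ‖f (g z')‖ ≤ ehG D z z' := le_ehG hz' hfg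
  -- numeric assembly
  have hG0 : 0 ≤ ehG D z z' := ehG_nonneg D z z'
  have key1 : (1+t) * ‖c‖ ≤ ehG D z z' + 8/R^2 := by
    have : ‖τ * c‖ ≤ ‖psi τ‖ + 8/R^2 := by
      have h0 : τ * c = psi τ - (psi τ - τ * c) := by abel
      calc ‖τ * c‖ = ‖psi τ - (psi τ - τ * c)‖ := by rw [← h0]
      _ ≤ ‖psi τ‖ + ‖psi τ - τ * c‖ := norm_sub_le _ _
      _ ≤ ‖psi τ‖ + 8/R^2 := by linarith [hevτ]
    rw [norm_mul, hτnorm] at this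
    rw [hpsiτ] at this
    linarith [hfgle]
  have key2 : ‖psi 1‖ ≤ ‖c‖ + 2/R^2 := by
    have h0 : psi 1 = c + (psi 1 - c) := by abel
    calc ‖psi 1‖ = ‖c + (psi 1 - c)‖ := by rw [← h0]
    _ ≤ ‖c‖ + ‖psi 1 - c‖ := norm_add_le _ _
    _ ≤ ‖c‖ + 2/R^2 := by linarith [hev1]
  have hpsi1v : psi 1 = f (h z') := by
    rw [hpsi]; simp only [one_smul]; rw [hwdef]; congr 1; abel
  have hcle : ‖c‖ ≤ (d-ε)/d * (ehG D z z' + 8/R^2) := by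
    have h1t : 0 < 1 + t := by linarith
    have := mul_le_mul_of_nonneg_left key1 hq0
    rw [← mul_assoc, hq, one_mul] at this
    linarith
  have hRw : 1/R^2 = ‖w‖^2/ε^2 := by
    rw [hR]; field_simp
  have hfin : ‖f (h z')‖ ≤ (d-ε)/d * ehG D z z' + 10 * (1/R^2) := by
    rw [← hpsi1v]
    have hR2pos : 0 < 1/R^2 := by positivity
    calc ‖psi 1‖ ≤ ‖c‖ + 2/R^2 := key2
    _ ≤ (d-ε)/d * (ehG D z z' + 8/R^2) + 2/R^2 := by linarith
    _ = (d-ε)/d * ehG D z z' + ((d-ε)/d * 8 + 2) * (1/R^2) := by ring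
    _ ≤ (d-ε)/d * ehG D z z' + 10 * (1/R^2) := by nlinarith [hq1, hq0, hR2pos]
  rw [hRw] at hfin
  calc ‖f (h z')‖ ≤ (d-ε)/d * ehG D z z' + 10 * (‖w‖^2/ε^2) := hfin
  _ = (d-ε)/d * ehG D z z' + 10 * ‖h z' - h z‖^2 / ε^2 := by rw [hwdef]; ring


/-- Chains of points in `D` with small steps. -/
def EHChain (D : Set E) (δ : ℝ) (x y : E) (k : ℕ) (z : ℕ → E) : Prop :=
  z 0 = x ∧ z k = y ∧ (∀ i ≤ k, z i ∈ D) ∧ ∀ i < k, ‖z (i+1) - z i‖ ≤ δ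

def ehSums (D : Set E) (δ : ℝ) (x y : E) : Set ℝ :=
  {s | ∃ k z, EHChain D δ x y k z ∧ s = ∑ i ∈ Finset.range k, ehG D (z i) (z (i+1))}

noncomputable def ehF (D : Set E) (δ : ℝ) (x y : E) : ℝ := sInf (ehSums D δ x y)

noncomputable def ehRho (D : Set E) (x y : E) : ℝ :=
  ⨆ δ : {δ : ℝ // 0 < δ}, ehF D δ x y

lemma ehSums_nonneg {D : Set E} {δ : ℝ} {x y : E} : ∀ s ∈ ehSums D δ x y, 0 ≤ s := by
  rintro s ⟨k, z, _, rfl⟩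
  exact Finset.sum_nonneg fun i _ => ehG_nonneg D _ _

lemma ehSums_bddBelow (D : Set E) (δ : ℝ) (x y : E) : BddBelow (ehSums D δ x y) :=
  ⟨0, fun s hs => ehSums_nonneg s hs⟩

/-- The straight segment chain. -/
lemma segChain {D : Set E} (hconv : Convex ℝ D) {x y : E} (hx : x ∈ D) (hy : y ∈ D)
    {δ : ℝ} (hδ : 0 < δ) {m : ℝ} (hm : ‖y - x‖ ≤ m) :
    ∃ k z, EHChain D δ x y k z ∧ (∀ i < k, ‖z (i+1) - z i‖ ≤ m / k) ∧
      (∀ i ≤ k, ∃ θ : ℝ, θ ∈ Icc (0:ℝ) 1 ∧ z i = x + θ • (y - x)) ∧ 0 < k := by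
  obtain ⟨k, hk0, hkδ⟩ : ∃ k : ℕ, 0 < k ∧ m / k ≤ δ := by
    refine ⟨⌈m/δ⌉₊ + 1, Nat.succ_pos _, ?_⟩
    have hm0 : 0 ≤ m := le_trans (norm_nonneg _) hm
    rw [div_le_iff₀ (by positivity)]
    have h1 : m/δ ≤ ⌈m/δ⌉₊ := Nat.le_ceil _
    have h2 : m/δ * δ = m := by field_simp
    have h3 : m ≤ (⌈m/δ⌉₊ : ℝ) * δ := by
      calc m = m/δ * δ := h2.symm
      _ ≤ (⌈m/δ⌉₊ : ℝ) * δ := mul_le_mul_of_nonneg_right h1 hδ.le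
    push_cast
    nlinarith
  have hk0' : (0:ℝ) < k := by exact_mod_cast hk0
  set z : ℕ → E := fun i => x + ((min i k : ℕ) / k : ℝ) • (y - x) with hz
  have hzmem : ∀ i, ∃ θ : ℝ, θ ∈ Icc (0:ℝ) 1 ∧ z i = x + θ • (y - x) := by
    intro i
    refine ⟨((min i k : ℕ) / k : ℝ), ⟨by positivity, ?_⟩, rfl⟩
    rw [div_le_one hk0']
    exact_mod_cast Nat.min_le_right i k
  have hstep : ∀ i < k, ‖z (i+1) - z i‖ ≤ m / k := by
    intro i hi
    have h1 : min (i+1) k = i+1 := min_eq_left hi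
    have h2 : min i k = i := min_eq_left hi.le
    have hzz : z (i+1) - z i = ((1:ℝ)/k) • (y - x) := by
      rw [hz]
      simp only [h1, h2]
      rw [add_sub_add_left_eq_sub, ← sub_smul]
      congr 1
      push_cast
      field_simp
      ring
    rw [hzz, norm_smul]
    simp only [norm_div, norm_one, Real.norm_natCast]
    calc 1/(k:ℝ) * ‖y - x‖ ≤ 1/(k:ℝ) * m := by
          apply mul_le_mul_of_nonneg_left hm (by positivity)
    _ = m / k := by ring
  refine ⟨k, z, ⟨?_, ?_, ?_, ?_⟩, hstep, fun i _ => hzmem i, hk0⟩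
  · rw [hz]; simp
  · rw [hz]; simp [min_self, div_self hk0'.ne']
  · intro i _
    obtain ⟨θ, hθ, hzi⟩ := hzmem i
    rw [hzi]
    exact hconv.add_smul_sub_mem hx hy hθ
  · intro i hi
    exact le_trans (hstep i hi) hkδ

lemma ehSums_nonempty {D : Set E} (hconv : Convex ℝ D) {x y : E} (hx : x ∈ D) (hy : y ∈ D)
    {δ : ℝ} (hδ : 0 < δ) : (ehSums D δ x y).Nonempty := by
  obtain ⟨k, z, hch, -, -, -⟩ := segChain hconv hx hy hδ (le_refl ‖y - x‖)
  exact ⟨_, k, z, hch, rfl⟩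

lemma ehF_nonneg (D : Set E) (δ : ℝ) (x y : E) : 0 ≤ ehF D δ x y :=
  Real.sInf_nonneg fun s hs => ehSums_nonneg s hs

lemma ehRho_nonneg (D : Set E) (x y : E) : 0 ≤ ehRho D x y :=
  Real.iSup_nonneg fun δ => ehF_nonneg D δ.1 x y

lemma norm_telescope (z : ℕ → E) (k : ℕ) :
    ‖z k - z 0‖ ≤ ∑ i ∈ Finset.range k, ‖z (i+1) - z i‖ := by
  induction k with
  | zero => simp
  | succ n ih =>
    rw [Finset.sum_range_succ]
    have h1 : ‖z (n+1) - z 0‖ ≤ ‖z (n+1) - z n‖ + ‖z n - z 0‖ := by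
      have := dist_triangle (z (n+1)) (z n) (z 0)
      simpa [dist_eq_norm] using this
    linarith

lemma ehF_lower {D : Set E} {d : ℝ} {x y : E}
    (hlt : ∀ a ∈ D, ∀ w ∈ D, ‖w - a‖ < d)
    (hconv : Convex ℝ D) (hx : x ∈ D) (hy : y ∈ D) {δ : ℝ} (hδ : 0 < δ) :
    ‖y - x‖ ≤ d * ehF D δ x y := by
  have hd : 0 < d := lt_of_le_of_lt (norm_nonneg _) (hlt x hx x hx)
  have key : ∀ s ∈ ehSums D δ x y, ‖y - x‖ / d ≤ s := by
    rintro s ⟨k, z, hch, rfl⟩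
    obtain ⟨hz0, hzk, hzmem, -⟩ := hch
    rw [div_le_iff₀ hd]
    have h1 : ∀ i ∈ Finset.range k, ‖z (i+1) - z i‖ ≤ d * ehG D (z i) (z (i+1)) := by
      intro i hi
      rw [Finset.mem_range] at hi
      exact norm_le_ehG (fun w hw => hlt (z i) (hzmem i hi.le) w hw)
        (hzmem (i+1) hi)
    calc ‖y - x‖ = ‖z k - z 0‖ := by rw [hz0, hzk]
    _ ≤ ∑ i ∈ Finset.range k, ‖z (i+1) - z i‖ := norm_telescope z k
    _ ≤ ∑ i ∈ Finset.range k, d * ehG D (z i) (z (i+1)) := Finset.sum_le_sum h1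
    _ = (∑ i ∈ Finset.range k, ehG D (z i) (z (i+1))) * d := by
          rw [Finset.sum_mul]
          exact Finset.sum_congr rfl fun i _ => mul_comm _ _
  have h2 : ‖y - x‖ / d ≤ ehF D δ x y :=
    le_csInf (ehSums_nonempty hconv hx hy hδ) key
  calc ‖y - x‖ = d * (‖y - x‖ / d) := by field_simp
  _ ≤ d * ehF D δ x y := mul_le_mul_of_nonneg_left h2 hd.le

lemma ehF_upper {D : Set E} {r : ℝ} {x y : E} (hconv : Convex ℝ D)
    (hr : 0 < r) (hx : x ∈ D) (hy : y ∈ D)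
    (hseg : ∀ θ : ℝ, θ ∈ Icc (0:ℝ) 1 → ball (x + θ • (y - x)) r ⊆ D)
    {δ : ℝ} (hδ : 0 < δ) :
    ehF D δ x y ≤ ‖y - x‖ / r := by
  have hδ' : 0 < min δ (r/2) := lt_min hδ (by positivity)
  obtain ⟨k, z, hch, hsteps, hform, hk0⟩ := segChain hconv hx hy hδ' (le_refl ‖y - x‖)
  have hk0' : (0:ℝ) < k := by exact_mod_cast hk0
  have hchδ : EHChain D δ x y k z :=
    ⟨hch.1, hch.2.1, hch.2.2.1, fun i hi => le_trans (hch.2.2.2 i hi) (min_le_left _ _)⟩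
  have hGstep : ∀ i ∈ Finset.range k, ehG D (z i) (z (i+1)) ≤ (‖y - x‖/k) / r := by
    intro i hi
    rw [Finset.mem_range] at hi
    obtain ⟨θ, hθ, hzi⟩ := hform i hi.le
    have hball : ball (z i) r ⊆ D := by rw [hzi]; exact hseg θ hθ
    have hlt : ‖z (i+1) - z i‖ < r :=
      lt_of_le_of_lt (le_trans (hch.2.2.2 i hi) (min_le_right _ _)) (by linarith)
    calc ehG D (z i) (z (i+1)) ≤ ‖z (i+1) - z i‖ / r := ehG_le_of_ball hr hball hlt
    _ ≤ (‖y - x‖/k) / r := by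
          gcongr
          exact hsteps i hi
  calc ehF D δ x y ≤ ∑ i ∈ Finset.range k, ehG D (z i) (z (i+1)) :=
        csInf_le (ehSums_bddBelow D δ x y) ⟨k, z, hchδ, rfl⟩
  _ ≤ ∑ _i ∈ Finset.range k, (‖y - x‖/k) / r := Finset.sum_le_sum hGstep
  _ = k * ((‖y - x‖/k) / r) := by
        rw [Finset.sum_const, Finset.card_range, nsmul_eq_mul]
  _ = ‖y - x‖ / r := by field_simp

lemma ehF_mono {D : Set E} (hconv : Convex ℝ D) {x y : E} (hx : x ∈ D) (hy : y ∈ D)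
    {δ δ' : ℝ} (h0 : 0 < δ) (hδδ' : δ ≤ δ') :
    ehF D δ' x y ≤ ehF D δ x y := by
  apply csInf_le_csInf (ehSums_bddBelow D δ' x y) (ehSums_nonempty hconv hx hy h0)
  rintro s ⟨k, z, ⟨h1, h2, h3, h4⟩, rfl⟩
  exact ⟨k, z, ⟨h1, h2, h3, fun i hi => le_trans (h4 i hi) hδδ'⟩, rfl⟩

/-- Concatenation of chains. -/
lemma ehF_triangle {D : Set E} (hconv : Convex ℝ D) {x y w : E}
    (hx : x ∈ D) (hy : y ∈ D) (hw : w ∈ D) {δ : ℝ} (hδ : 0 < δ) :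
    ehF D δ x w ≤ ehF D δ x y + ehF D δ y w := by
  apply le_add_of_forall_pos
  intro κ hκ
  obtain ⟨s₁, hs₁mem, hs₁⟩ := Real.lt_sInf_add_pos (ehSums_nonempty hconv hx hy hδ)
    (show (0:ℝ) < κ/2 by linarith)
  obtain ⟨s₂, hs₂mem, hs₂⟩ := Real.lt_sInf_add_pos (ehSums_nonempty hconv hy hw hδ)
    (show (0:ℝ) < κ/2 by linarith)
  obtain ⟨k₁, z₁, hch₁, rfl⟩ := hs₁mem
  obtain ⟨k₂, z₂, hch₂, rfl⟩ := hs₂mem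
  set z : ℕ → E := fun i => if i ≤ k₁ then z₁ i else z₂ (i - k₁) with hzdef
  have ha : ∀ i < k₁, z i = z₁ i ∧ z (i+1) = z₁ (i+1) := by
    intro i hi
    constructor
    · rw [hzdef]; simp [le_of_lt hi]
    · rw [hzdef]; simp [Nat.succ_le_of_lt hi]
  have hjoin : z₁ k₁ = z₂ 0 := by rw [hch₁.2.1, hch₂.1]
  have hb : ∀ i, k₁ ≤ i → z i = z₂ (i - k₁) := by
    intro i hi
    rw [hzdef]
    by_cases hik : i ≤ k₁
    · have : i = k₁ := le_antisymm hik hi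
      subst this
      simp [hjoin]
    · simp [hik]
  have hchain : EHChain D δ x w (k₁ + k₂) z := by
    refine ⟨?_, ?_, ?_, ?_⟩
    · rw [hzdef]; simp [hch₁.1]
    · rw [hb (k₁ + k₂) (Nat.le_add_right _ _)]
      simp [hch₂.2.1]
    · intro i hik
      by_cases hik1 : i ≤ k₁
      · rw [hzdef]; simp only [hik1, if_true]
        exact hch₁.2.2.1 i hik1
      · push_neg at hik1
        rw [hb i hik1.le]
        exact hch₂.2.2.1 _ (by omega)
    · intro i hi
      by_cases hik1 : i < k₁
      · obtain ⟨e1, e2⟩ := ha i hik1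
        rw [e1, e2]
        exact hch₁.2.2.2 i hik1
      · push_neg at hik1
        rw [hb i hik1, hb (i+1) (by omega)]
        have : i + 1 - k₁ = (i - k₁) + 1 := by omega
        rw [this]
        exact hch₂.2.2.2 _ (by omega)
  have hsum : ∑ i ∈ Finset.range (k₁ + k₂), ehG D (z i) (z (i+1)) =
      (∑ i ∈ Finset.range k₁, ehG D (z₁ i) (z₁ (i+1))) +
      (∑ i ∈ Finset.range k₂, ehG D (z₂ i) (z₂ (i+1))) := by
    rw [Finset.sum_range_add]
    congr 1
    · apply Finset.sum_congr rfl
      intro i hi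
      rw [Finset.mem_range] at hi
      obtain ⟨e1, e2⟩ := ha i hi
      rw [e1, e2]
    · apply Finset.sum_congr rfl
      intro i hi
      rw [hb (k₁ + i) (Nat.le_add_right _ _), hb (k₁ + i + 1) (by omega)]
      congr 2 <;> omega
  have hmem : (∑ i ∈ Finset.range k₁, ehG D (z₁ i) (z₁ (i+1))) +
      (∑ i ∈ Finset.range k₂, ehG D (z₂ i) (z₂ (i+1))) ∈ ehSums D δ x w :=
    ⟨k₁ + k₂, z, hchain, hsum.symm⟩
  have hle := csInf_le (ehSums_bddBelow D δ x w) hmem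
  have e1 : ehF D δ x y = sInf (ehSums D δ x y) := rfl
  have e2 : ehF D δ y w = sInf (ehSums D δ y w) := rfl
  have e3 : ehF D δ x w = sInf (ehSums D δ x w) := rfl
  rw [e1, e2, e3]
  linarith

lemma ehF_le_ehRho {D : Set E} {x y : E}
    (hB : BddAbove (range fun δ : {δ : ℝ // 0 < δ} => ehF D δ.1 x y))
    {δ : ℝ} (hδ : 0 < δ) : ehF D δ x y ≤ ehRho D x y :=
  le_ciSup hB (⟨δ, hδ⟩ : {δ : ℝ // 0 < δ})

lemma ehRho_le {D : Set E} {x y : E} {c : ℝ}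
    (H : ∀ δ : ℝ, 0 < δ → ehF D δ x y ≤ c) : ehRho D x y ≤ c := by
  haveI : Nonempty {δ : ℝ // 0 < δ} := ⟨⟨1, one_pos⟩⟩
  exact ciSup_le fun δ => H δ.1 δ.2

lemma ehRho_bdd {D : Set E} (hD : IsOpen D) (hconv : Convex ℝ D) {x y : E}
    (hx : x ∈ D) (hy : y ∈ D) :
    BddAbove (range fun δ : {δ : ℝ // 0 < δ} => ehF D δ.1 x y) := by
  have hK : IsCompact (segment ℝ x y) := by
    rw [segment_eq_image']
    exact isCompact_Icc.image (by fun_prop)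
  obtain ⟨r, hr0, hrsub⟩ := hK.exists_thickening_subset_open hD
    (hconv.segment_subset hx hy)
  have hseg : ∀ θ : ℝ, θ ∈ Icc (0:ℝ) 1 → ball (x + θ • (y - x)) r ⊆ D := by
    intro θ hθ b hb
    apply hrsub
    rw [Metric.mem_thickening_iff]
    refine ⟨x + θ • (y - x), ?_, hb⟩
    rw [segment_eq_image']
    exact ⟨θ, hθ, rfl⟩
  refine ⟨‖y - x‖ / r, ?_⟩
  rintro s ⟨⟨δ, hδ⟩, rfl⟩
  exact ehF_upper hconv hr0 hx hy hseg hδ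

lemma ehRho_lower {D : Set E} {d : ℝ} {x y : E}
    (hlt : ∀ a ∈ D, ∀ w ∈ D, ‖w - a‖ < d)
    (hD : IsOpen D) (hconv : Convex ℝ D) (hx : x ∈ D) (hy : y ∈ D) :
    ‖y - x‖ ≤ d * ehRho D x y := by
  have hd : 0 < d := lt_of_le_of_lt (norm_nonneg _) (hlt x hx x hx)
  calc ‖y - x‖ ≤ d * ehF D 1 x y := ehF_lower hlt hconv hx hy one_pos
  _ ≤ d * ehRho D x y := by
      apply mul_le_mul_of_nonneg_left _ hd.le
      exact ehF_le_ehRho (ehRho_bdd hD hconv hx hy) one_pos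

lemma ehRho_le_deep {D : Set E} {r : ℝ} {x y : E} (hconv : Convex ℝ D)
    (hr : 0 < r) (hx : x ∈ D) (hy : y ∈ D)
    (hseg : ∀ θ : ℝ, θ ∈ Icc (0:ℝ) 1 → ball (x + θ • (y - x)) r ⊆ D) :
    ehRho D x y ≤ ‖y - x‖ / r :=
  ehRho_le fun δ hδ => ehF_upper hconv hr hx hy hseg hδ

lemma ehRho_triangle {D : Set E} (hD : IsOpen D) (hconv : Convex ℝ D) {x y w : E}
    (hx : x ∈ D) (hy : y ∈ D) (hw : w ∈ D) :
    ehRho D x w ≤ ehRho D x y + ehRho D y w := by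
  apply ehRho_le
  intro δ hδ
  calc ehF D δ x w ≤ ehF D δ x y + ehF D δ y w := ehF_triangle hconv hx hy hw hδ
  _ ≤ ehRho D x y + ehRho D y w :=
      add_le_add (ehF_le_ehRho (ehRho_bdd hD hconv hx hy) hδ)
        (ehF_le_ehRho (ehRho_bdd hD hconv hy hw) hδ)

/-- The crucial contraction property of the chain metric. -/
lemma ehRho_contract_aux {D : Set E} {h : E → E} {ε d M : ℝ}
    (hD : IsOpen D) (hconv : Convex ℝ D)
    (hmaps : Set.MapsTo h D D)
    (hε : 0 < ε) (hd : 0 < d)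
    (hlt : ∀ a ∈ D, ∀ w ∈ D, ‖w - a‖ < d)
    (HLip : ∀ a ∈ D, ∀ b ∈ D, ‖h b - h a‖ ≤ M * ‖b - a‖)
    (hM0 : 0 ≤ M)
    (HStep : ∀ z ∈ D, ∀ z' ∈ D, 2 * ‖h z' - h z‖ < ε →
      ehG D (h z) (h z') ≤ (d - ε)/d * ehG D z z' + 10 * ‖h z' - h z‖^2 / ε^2)
    (hεd : ε ≤ d)
    {x y : E} (hx : x ∈ D) (hy : y ∈ D) :
    ehRho D (h x) (h y) ≤ (d - ε)/d * ehRho D x y := by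
  set q : ℝ := (d - ε)/d with hqdef
  have hq0 : 0 ≤ q := by rw [hqdef]; exact div_nonneg (by linarith) hd.le
  have hq1 : q ≤ 1 := by rw [hqdef, div_le_one hd]; linarith
  set P := ehRho D x y with hPdef
  have hP0 : 0 ≤ P := ehRho_nonneg D x y
  apply ehRho_le
  intro δ' hδ'
  apply le_add_of_forall_pos
  intro κ hκ
  set B := d * (P + 1) with hBdef
  have hB0 : 0 < B := by positivity
  set M1 := M + 1 with hM1def
  have hM10 : 0 < M1 := by positivity
  set δ := min (min (δ'/M1) (ε/(4*M1))) (κ*ε^2/(20*M1^2*B)) with hδdef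
  have hδ0 : 0 < δ := by
    refine lt_min (lt_min (div_pos hδ' hM10) (div_pos hε ?_)) (div_pos ?_ ?_)
    · nlinarith
    · positivity
    · have hsq : (0:ℝ) < M1^2 := pow_pos hM10 2
      nlinarith
  have hδ1 : δ ≤ δ'/M1 := le_trans (min_le_left _ _) (min_le_left _ _)
  have hδ2 : δ ≤ ε/(4*M1) := le_trans (min_le_left _ _) (min_le_right _ _)
  have hδ3 : δ ≤ κ*ε^2/(20*M1^2*B) := min_le_right _ _
  have h20B : (0:ℝ) < 20*M1^2*B := by
    have := pow_pos hM10 2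
    nlinarith
  clear_value δ B M1
  -- pick a near-optimal chain
  obtain ⟨s, hsmem, hslt⟩ := Real.lt_sInf_add_pos (ehSums_nonempty hconv hx hy hδ0)
    (show (0:ℝ) < min 1 (κ/2) by positivity)
  obtain ⟨k, z, hch, rfl⟩ := hsmem
  have hFP : ehF D δ x y ≤ P :=
    ehF_le_ehRho (ehRho_bdd hD hconv hx hy) hδ0
  set s := ∑ i ∈ Finset.range k, ehG D (z i) (z (i+1)) with hsdef
  have hFeq : sInf (ehSums D δ x y) = ehF D δ x y := rfl
  have hs1 : s ≤ P + 1 := by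
    have := min_le_left (1:ℝ) (κ/2)
    rw [hFeq] at hslt
    linarith [hslt]
  have hs2 : s ≤ P + κ/2 := by
    have := min_le_right (1:ℝ) (κ/2)
    rw [hFeq] at hslt
    linarith [hslt]
  -- image chain
  have hzm : ∀ i ≤ k, z i ∈ D := hch.2.2.1
  have hwsmall : ∀ i < k, ‖h (z (i+1)) - h (z i)‖ ≤ M1 * δ := by
    intro i hi
    calc ‖h (z (i+1)) - h (z i)‖ ≤ M * ‖z (i+1) - z i‖ :=
          HLip (z i) (hzm i hi.le) (z (i+1)) (hzm (i+1) hi)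
    _ ≤ M1 * δ := by
        apply mul_le_mul (by linarith) (hch.2.2.2 i hi) (norm_nonneg _) hM10.le
  have hchain' : EHChain D δ' (h x) (h y) k (fun i => h (z i)) := by
    refine ⟨by simp only [hch.1], by simp only [hch.2.1], fun i hi => hmaps (hzm i hi), ?_⟩
    intro i hi
    calc ‖h (z (i+1)) - h (z i)‖ ≤ M1 * δ := hwsmall i hi
    _ ≤ M1 * (δ'/M1) := mul_le_mul_of_nonneg_left hδ1 hM10.le
    _ = δ' := by field_simp
  have hδε : M1 * δ ≤ ε/4 := by
    calc M1 * δ ≤ M1 * (ε/(4*M1)) := mul_le_mul_of_nonneg_left hδ2 hM10.le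
    _ = ε/4 := by field_simp
  -- per-step estimate
  have hper : ∀ i ∈ Finset.range k,
      ehG D (h (z i)) (h (z (i+1))) ≤
        q * ehG D (z i) (z (i+1)) + (10*M1^2*δ*d/ε^2) * ehG D (z i) (z (i+1)) := by
    intro i hi
    rw [Finset.mem_range] at hi
    have hcond : 2 * ‖h (z (i+1)) - h (z i)‖ < ε := by
      have h1 := hwsmall i hi
      have h2 : M1 * δ ≤ ε/4 := hδε
      linarith
    have hstep := HStep (z i) (hzm i hi.le) (z (i+1)) (hzm (i+1) hi) hcond
    have hwG : ‖h (z (i+1)) - h (z i)‖ ≤ M1 * (d * ehG D (z i) (z (i+1))) := by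
      calc ‖h (z (i+1)) - h (z i)‖ ≤ M * ‖z (i+1) - z i‖ :=
            HLip (z i) (hzm i hi.le) (z (i+1)) (hzm (i+1) hi)
      _ ≤ M1 * ‖z (i+1) - z i‖ := by
            apply mul_le_mul_of_nonneg_right (by linarith) (norm_nonneg _)
      _ ≤ M1 * (d * ehG D (z i) (z (i+1))) := by
            apply mul_le_mul_of_nonneg_left _ hM10.le
            exact norm_le_ehG (fun w hw => hlt (z i) (hzm i hi.le) w hw) (hzm (i+1) hi)
    have hwδ : ‖h (z (i+1)) - h (z i)‖ ≤ M1 * δ := hwsmall i hi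
    have hGnn : 0 ≤ ehG D (z i) (z (i+1)) := ehG_nonneg D _ _
    have hsq : ‖h (z (i+1)) - h (z i)‖^2 ≤ M1^2*δ*d* ehG D (z i) (z (i+1)) := by
      have hn : 0 ≤ ‖h (z (i+1)) - h (z i)‖ := norm_nonneg _
      calc ‖h (z (i+1)) - h (z i)‖^2 = ‖h (z (i+1)) - h (z i)‖ * ‖h (z (i+1)) - h (z i)‖ :=
            sq _
      _ ≤ (M1 * δ) * (M1 * (d * ehG D (z i) (z (i+1)))) := by
            apply mul_le_mul hwδ hwG hn (by positivity)
      _ = M1^2*δ*d* ehG D (z i) (z (i+1)) := by ring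
    calc ehG D (h (z i)) (h (z (i+1))) ≤
          q * ehG D (z i) (z (i+1)) + 10 * ‖h (z (i+1)) - h (z i)‖^2 / ε^2 := hstep
    _ ≤ q * ehG D (z i) (z (i+1)) + (10*M1^2*δ*d/ε^2) * ehG D (z i) (z (i+1)) := by
          have : 10 * ‖h (z (i+1)) - h (z i)‖^2 / ε^2 ≤
              (10*M1^2*δ*d/ε^2) * ehG D (z i) (z (i+1)) := by
            rw [div_le_iff₀ (by positivity)]
            have hε2 : (0:ℝ) < ε^2 := by positivity
            calc 10 * ‖h (z (i+1)) - h (z i)‖^2 ≤ 10 * (M1^2*δ*d* ehG D (z i) (z (i+1))) := by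
                  linarith [hsq]
            _ = 10*M1^2*δ*d/ε^2 * ehG D (z i) (z (i+1)) * ε^2 := by field_simp
          linarith
  have hFle : ehF D δ' (h x) (h y) ≤
      ∑ i ∈ Finset.range k, ehG D (h (z i)) (h (z (i+1))) :=
    csInf_le (ehSums_bddBelow D δ' (h x) (h y)) ⟨k, _, hchain', rfl⟩
  have hsum2 : ∑ i ∈ Finset.range k, ehG D (h (z i)) (h (z (i+1))) ≤
      q * s + (10*M1^2*δ*d/ε^2) * s := by
    calc ∑ i ∈ Finset.range k, ehG D (h (z i)) (h (z (i+1))) ≤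
        ∑ i ∈ Finset.range k,
          (q * ehG D (z i) (z (i+1)) + (10*M1^2*δ*d/ε^2) * ehG D (z i) (z (i+1))) :=
          Finset.sum_le_sum hper
    _ = q * s + (10*M1^2*δ*d/ε^2) * s := by
        rw [hsdef, Finset.sum_add_distrib, ← Finset.mul_sum, ← Finset.mul_sum]
  have herr : (10*M1^2*δ*d/ε^2) * s ≤ κ/2 := by
    have hs0 : 0 ≤ s := Finset.sum_nonneg fun i _ => ehG_nonneg D _ _
    have hsB : d * s ≤ B := by
      rw [hBdef]
      apply mul_le_mul_of_nonneg_left _ hd.le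
      linarith [hs1]
    have hb' : 0 ≤ (10*M1^2/ε^2) * (κ*ε^2/(20*M1^2*B)) :=
      mul_nonneg (by positivity) (div_nonneg (by positivity) h20B.le)
    calc (10*M1^2*δ*d/ε^2) * s = (10*M1^2/ε^2) * δ * (d * s) := by ring
    _ ≤ (10*M1^2/ε^2) * (κ*ε^2/(20*M1^2*B)) * B := by
        apply mul_le_mul _ hsB (mul_nonneg hd.le hs0) hb'
        exact mul_le_mul_of_nonneg_left hδ3 (by positivity)
    _ = κ/2 := by
        field_simp
        ring
  have hqs : q * s ≤ q * P + κ/2 := by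
    calc q * s ≤ q * (P + κ/2) := mul_le_mul_of_nonneg_left hs2 hq0
    _ = q * P + q * (κ/2) := by ring
    _ ≤ q * P + κ/2 := by nlinarith
  calc ehF D δ' (h x) (h y) ≤ q * s + (10*M1^2*δ*d/ε^2) * s := le_trans hFle hsum2
  _ ≤ q * P + κ/2 + κ/2 := by linarith
  _ = q * P + κ := by ring


/-- Final form of the contraction lemma. -/
lemma ehRho_contract {D : Set E} {h : E → E} {ε d M : ℝ}
    (hD : IsOpen D) (hconv : Convex ℝ D)
    (hmaps : Set.MapsTo h D D)
    (hε : 0 < ε) (hd : 0 < d)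
    (hlt : ∀ a ∈ D, ∀ w ∈ D, ‖w - a‖ < d)
    (HLip : ∀ a ∈ D, ∀ b ∈ D, ‖h b - h a‖ ≤ M * ‖b - a‖)
    (hM0 : 0 ≤ M)
    (hdiffD : DifferentiableOn ℂ h D)
    (h2εd : 2*ε ≤ d)
    (hball : ∀ x ∈ D, ball (h x) ε ⊆ D)
    (hdiam : ∀ a ∈ D, ∀ b ∈ D, ‖h a - h b‖ ≤ d - 2*ε)
    {x y : E} (hx : x ∈ D) (hy : y ∈ D) :
    ehRho D (h x) (h y) ≤ (d - ε)/d * ehRho D x y :=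
  ehRho_contract_aux hD hconv hmaps hε hd hlt HLip hM0
    (fun z hz z' hz' hc => ehG_step hdiffD hε h2εd hball hdiam hz hz' hc)
    (by linarith) hx hy

end EarleHamilton

open Set Metric Function EarleHamilton

/-- Quantitative Earle–Hamilton theorem, a priori bound: a holomorphic map `h`
of a nonempty bounded convex open set `𝒟` strictly into itself (at distance `≥ ε` from the
complement) with derivative bounded by `M` has a unique fixed point `w*`, and the iterates
starting from any `w₀ ∈ h(𝒟)` satisfy
`‖hⁿ(w₀) − w*‖ ≤ (M/ε²)·diam(𝒟)²·‖h(w₀) − w₀‖·q^{n−1}` with `q = (1 + ε/diam 𝒟)⁻¹`. -/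
theorem earle_hamilton_a_priori {E : Type*} [NormedAddCommGroup E] [NormedSpace ℂ E]
    [CompleteSpace E] (D : Set E) (hD : IsOpen D) (hne : D.Nonempty)
    (hbdd : Bornology.IsBounded D) (hconv : Convex ℝ D)
    (h : E → E) (h' : E → E →L[ℂ] E)
    (hmaps : Set.MapsTo h D D)
    (hdiff : ∀ w ∈ D, HasFDerivAt h (h' w) w)
    (ε M : ℝ) (hε : 0 < ε)
    (hdist : ∀ x ∈ D, ∀ y ∈ Dᶜ, ε ≤ ‖h x - y‖)
    (hM : ∀ w ∈ D, ‖h' w‖ ≤ M) :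
    ∃ wst ∈ D, h wst = wst ∧ (∀ w ∈ D, h w = w → w = wst) ∧
      ∀ w₀ ∈ h '' D, ∀ n : ℕ, 1 ≤ n →
        ‖h^[n] w₀ - wst‖ ≤
          M / ε ^ 2 * Metric.diam D ^ 2 * ‖h w₀ - w₀‖ *
            ((1 + ε / Metric.diam D)⁻¹) ^ (n - 1) := by
  rcases subsingleton_or_nontrivial E with hsub | hnt
  · obtain ⟨x₀, hx₀⟩ := hne
    refine ⟨x₀, hx₀, Subsingleton.elim _ _, fun w _ _ => Subsingleton.elim _ _, ?_⟩
    intro w₀ _ n _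
    have h1 : h^[n] w₀ - x₀ = 0 := Subsingleton.elim _ _
    have h2 : h w₀ - w₀ = 0 := Subsingleton.elim _ _
    rw [h1, h2]
    simp
  set d := Metric.diam D with hddef
  -- depth of the image
  have hball : ∀ x ∈ D, ball (h x) ε ⊆ D := by
    intro x hx b hb
    by_contra hbD
    have h1 := hdist x hx b hbD
    rw [mem_ball, dist_eq_norm, ← norm_sub_rev] at hb
    linarith
  -- unit vectors in any direction
  have hunit : ∀ v : E, v ≠ 0 → ‖(‖v‖⁻¹ • v)‖ = 1 := by
    intro v hv
    rw [norm_smul, norm_inv, norm_norm]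
    exact inv_mul_cancel₀ (norm_ne_zero_iff.2 hv)
  have hεd2 : 2*ε ≤ d := by
    obtain ⟨x₀, hx₀⟩ := hne
    obtain ⟨v, hv0⟩ := exists_ne (0 : E)
    set u : E := ‖v‖⁻¹ • v with hu
    have hu1 : ‖u‖ = 1 := hunit v hv0
    have key : ∀ s : ℝ, 0 ≤ s → s < ε → 2*s ≤ d := by
      intro s hs0 hsε
      have hsu : ‖s • u‖ = s := by
        rw [norm_smul, hu1, mul_one, Real.norm_eq_abs, abs_of_nonneg hs0]
      have hp : h x₀ + s • u ∈ D := by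
        apply hball x₀ hx₀
        rw [mem_ball, dist_eq_norm, add_sub_cancel_left, hsu]
        exact hsε
      have hm : h x₀ - s • u ∈ D := by
        apply hball x₀ hx₀
        rw [mem_ball, dist_eq_norm]
        rw [sub_sub_cancel_left, norm_neg, hsu]
        exact hsε
      have hdd := Metric.dist_le_diam_of_mem hbdd hp hm
      have he : dist (h x₀ + s • u) (h x₀ - s • u) = 2*s := by
        rw [dist_eq_norm]
        have : (h x₀ + s • u) - (h x₀ - s • u) = (2*s) • u := by
          rw [two_mul, add_smul]
          abel
        rw [this, norm_smul, hu1, mul_one, Real.norm_eq_abs, abs_of_nonneg (by linarith)]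
      rw [he] at hdd
      exact hdd
    by_contra hcon
    push_neg at hcon
    have hd0 : 0 ≤ d := Metric.diam_nonneg
    have := key ((d/2 + ε)/2) (by linarith) (by linarith)
    linarith
  have hd0 : 0 < d := by linarith
  -- strict diameter bound
  have hlt : ∀ a ∈ D, ∀ w ∈ D, ‖w - a‖ < d := by
    intro a ha w hw
    rcases eq_or_ne w a with rfl | hne
    · simpa using hd0
    obtain ⟨r, hr0, hrsub⟩ := Metric.isOpen_iff.1 hD w hw
    set N := ‖w - a‖ with hN
    have hN0 : 0 < N := by rw [hN, norm_pos_iff, sub_ne_zero]; exact hne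
    set uw : E := N⁻¹ • (w - a) with huw
    have huw1 : ‖uw‖ = 1 := hunit _ (sub_ne_zero.2 hne)
    set s := r/2 with hs
    have hs0 : 0 < s := by positivity
    have hwD : w + s • uw ∈ D := by
      apply hrsub
      rw [mem_ball, dist_eq_norm, add_sub_cancel_left, norm_smul, huw1, mul_one,
        Real.norm_eq_abs, abs_of_pos hs0]
      linarith
    have hdd := Metric.dist_le_diam_of_mem hbdd hwD ha
    have he : dist (w + s • uw) a = N + s := by
      rw [dist_eq_norm]
      have h1 : (w + s • uw) - a = (1 + s/N) • (w - a) := by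
        rw [huw, smul_smul, add_smul, one_smul]
        have : s * N⁻¹ = s / N := by ring
        rw [this]
        abel
      rw [h1, norm_smul, Real.norm_eq_abs, abs_of_pos (by positivity), ← hN]
      field_simp
    rw [he] at hdd
    linarith
  -- image diameter bound
  have hdiam : ∀ a ∈ D, ∀ b ∈ D, ‖h a - h b‖ ≤ d - 2*ε := by
    intro a ha b hb
    set A := ‖h a - h b‖ with hA
    have key : ∀ s : ℝ, 0 ≤ s → s < ε → A + 2*s ≤ d := by
      intro s hs0 hsε
      rcases eq_or_ne (h a) (h b) with heq | hne
      · have : A = 0 := by rw [hA, heq, sub_self, norm_zero]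
        rw [this]
        have h1 := hεd2
        linarith
      have hN0 : 0 < A := by rw [hA, norm_pos_iff, sub_ne_zero]; exact hne
      set uab : E := A⁻¹ • (h a - h b) with huab
      have hu1 : ‖uab‖ = 1 := hunit _ (sub_ne_zero.2 hne)
      have hsu : ‖s • uab‖ = s := by
        rw [norm_smul, hu1, mul_one, Real.norm_eq_abs, abs_of_nonneg hs0]
      have hp : h a + s • uab ∈ D := by
        apply hball a ha
        rw [mem_ball, dist_eq_norm, add_sub_cancel_left, hsu]
        exact hsε
      have hq : h b - s • uab ∈ D := by
        apply hball b hb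
        rw [mem_ball, dist_eq_norm, sub_sub_cancel_left, norm_neg, hsu]
        exact hsε
      have hdd := Metric.dist_le_diam_of_mem hbdd hp hq
      have he : dist (h a + s • uab) (h b - s • uab) = A + 2*s := by
        rw [dist_eq_norm]
        have h1 : (h a + s • uab) - (h b - s • uab) = (1 + 2*s/A) • (h a - h b) := by
          rw [huab, smul_smul, add_smul, one_smul]
          have h2 : s * A⁻¹ = s/A := by ring
          rw [h2]
          have h3 : (2*s/A) • (h a - h b) = (s/A) • (h a - h b) + (s/A) • (h a - h b) := by
            rw [← add_smul]
            congr 1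
            ring
          rw [h3]
          abel
        rw [h1, norm_smul, Real.norm_eq_abs, abs_of_pos (by positivity), ← hA]
        field_simp
      rw [he] at hdd
      exact hdd
    by_contra hcon
    push_neg at hcon
    have hA_le : A ≤ d := by
      have := key 0 le_rfl hε
      linarith
    have := key ((d - A)/2/2 + ε/2) (by linarith) (by linarith)
    linarith
  -- Lipschitz bound
  have hM0 : 0 ≤ M := by
    obtain ⟨x₀, hx₀⟩ := hne
    exact (norm_nonneg _).trans (hM x₀ hx₀)
  have HLip : ∀ a ∈ D, ∀ b ∈ D, ‖h b - h a‖ ≤ M * ‖b - a‖ := by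
    intro a ha b hb
    exact Convex.norm_image_sub_le_of_norm_hasFDerivWithin_le
      (f' := fun x => (h' x).restrictScalars ℝ)
      (fun x hx => ((hdiff x hx).restrictScalars ℝ).hasFDerivWithinAt)
      (fun x hx => by
        rw [ContinuousLinearMap.norm_restrictScalars]
        exact hM x hx) hconv ha hb
  have hdiffD : DifferentiableOn ℂ h D := fun x hx =>
    (hdiff x hx).differentiableAt.differentiableWithinAt
  set q' : ℝ := (d - ε)/d with hq'def
  have hq'0 : 0 ≤ q' := by rw [hq'def]; exact div_nonneg (by linarith) hd0.le
  have hq'1 : q' < 1 := by rw [hq'def, div_lt_one hd0]; linarith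
  have CONTRACT : ∀ x ∈ D, ∀ y ∈ D, ehRho D (h x) (h y) ≤ q' * ehRho D x y :=
    fun x hx y hy => ehRho_contract hD hconv hmaps hε hd0 hlt HLip hM0 hdiffD hεd2
      hball hdiam hx hy
  -- deep segments
  have hdeepseg : ∀ a b : E, ball a ε ⊆ D → ball b ε ⊆ D →
      ∀ θ : ℝ, θ ∈ Icc (0:ℝ) 1 → ball (a + θ • (b - a)) ε ⊆ D := by
    intro a b hA hB θ hθ c hc
    set v := c - (a + θ • (b - a)) with hv
    have hvn : ‖v‖ < ε := by
      rw [hv, ← dist_eq_norm]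
      exact mem_ball.1 hc
    have haD : a + v ∈ D := by
      apply hA
      rw [mem_ball, dist_eq_norm, add_sub_cancel_left]
      exact hvn
    have hbD : b + v ∈ D := by
      apply hB
      rw [mem_ball, dist_eq_norm, add_sub_cancel_left]
      exact hvn
    have hmem := hconv.add_smul_sub_mem haD hbD hθ
    have heq : (a + v) + θ • ((b + v) - (a + v)) = c := by
      have h1 : (b + v) - (a + v) = b - a := by abel
      rw [h1, hv]
      abel
    rwa [heq] at hmem
  -- the orbit from a base point
  obtain ⟨x₀, hx₀⟩ := hne
  have hiterD : ∀ n : ℕ, h^[n] x₀ ∈ D := by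
    intro n
    induction n with
    | zero => simpa using hx₀
    | succ n ih =>
      rw [Function.iterate_succ_apply']
      exact hmaps ih
  set v0 : ℕ → E := fun n => h^[n+1] x₀ with hv0
  have hv0eq : ∀ n, v0 n = h (h^[n] x₀) := fun n => Function.iterate_succ_apply' h n x₀
  have hv0D : ∀ n, v0 n ∈ D := fun n => by rw [hv0eq n]; exact hmaps (hiterD n)
  have hv0succ : ∀ n, v0 (n+1) = h (v0 n) := fun n => Function.iterate_succ_apply' h (n+1) x₀
  have hdecay : ∀ n, ehRho D (v0 n) (v0 (n+1)) ≤ q'^n * ehRho D (v0 0) (v0 1) := by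
    intro n
    induction n with
    | zero => simp
    | succ n ih =>
      have hc := CONTRACT (v0 n) (hv0D n) (v0 (n+1)) (hv0D (n+1))
      rw [← hv0succ n, ← hv0succ (n+1)] at hc
      calc ehRho D (v0 (n+1)) (v0 (n+2)) ≤ q' * ehRho D (v0 n) (v0 (n+1)) := hc
      _ ≤ q' * (q'^n * ehRho D (v0 0) (v0 1)) := mul_le_mul_of_nonneg_left ih hq'0
      _ = q'^(n+1) * ehRho D (v0 0) (v0 1) := by ring
  have hcauchy : CauchySeq v0 := by
    apply cauchySeq_of_le_geometric q' (d * ehRho D (v0 0) (v0 1)) hq'1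
    intro n
    rw [dist_eq_norm, norm_sub_rev]
    calc ‖v0 (n+1) - v0 n‖ ≤ d * ehRho D (v0 n) (v0 (n+1)) :=
          ehRho_lower hlt hD hconv (hv0D n) (hv0D (n+1))
    _ ≤ d * (q'^n * ehRho D (v0 0) (v0 1)) := mul_le_mul_of_nonneg_left (hdecay n) hd0.le
    _ = d * ehRho D (v0 0) (v0 1) * q'^n := by ring
  obtain ⟨wst, hwst⟩ := cauchySeq_tendsto_of_complete hcauchy
  have hwstball : ball wst ε ⊆ D := by
    intro b hb
    by_contra hbD
    have hges : ∀ n, ε ≤ ‖v0 n - b‖ := by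
      intro n
      rw [hv0eq n]
      exact hdist _ (hiterD n) b hbD
    have hlim : Filter.Tendsto (fun n => ‖v0 n - b‖) Filter.atTop (nhds ‖wst - b‖) :=
      ((hwst.sub tendsto_const_nhds).norm)
    have hge := ge_of_tendsto hlim (Filter.Eventually.of_forall hges)
    rw [mem_ball, dist_eq_norm, ← norm_sub_rev] at hb
    linarith
  have hwstD : wst ∈ D := hwstball (mem_ball_self hε)
  have hfix : h wst = wst := by
    have hcont : ContinuousAt h wst := (hdiff wst hwstD).differentiableAt.continuousAt
    have h1 : Filter.Tendsto (fun n => h (v0 n)) Filter.atTop (nhds (h wst)) :=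
      hcont.tendsto.comp hwst
    have h2 : Filter.Tendsto (fun n => v0 (n+1)) Filter.atTop (nhds wst) :=
      hwst.comp (Filter.tendsto_add_atTop_nat 1)
    have h3 : (fun n => v0 (n+1)) = fun n => h (v0 n) := funext hv0succ
    rw [h3] at h2
    exact tendsto_nhds_unique h1 h2
  refine ⟨wst, hwstD, hfix, ?_, ?_⟩
  · intro w hw hfw
    have hc := CONTRACT w hw wst hwstD
    rw [hfw, hfix] at hc
    have hρ0 : ehRho D w wst ≤ 0 := by nlinarith [ehRho_nonneg D w wst]
    have hlow := ehRho_lower hlt hD hconv hw hwstD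
    have hn0 : ‖wst - w‖ ≤ 0 := by nlinarith
    have : wst - w = 0 := by
      rw [← norm_le_zero_iff]
      exact hn0
    have := sub_eq_zero.1 this
    exact this.symm
  · intro w₀ hw₀ n hn
    obtain ⟨a, ha, hae⟩ := hw₀
    have hw₀D : w₀ ∈ D := hae ▸ hmaps ha
    have hw₀ball : ball w₀ ε ⊆ D := by rw [← hae]; exact hball a ha
    have hiter : ∀ j : ℕ, h^[j] w₀ ∈ D := by
      intro j
      induction j with
      | zero => simpa using hw₀D
      | succ j ih => rw [Function.iterate_succ_apply']; exact hmaps ih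
    have hrhoiter : ∀ j : ℕ, ehRho D (h^[j] w₀) wst ≤ q'^j * ehRho D w₀ wst := by
      intro j
      induction j with
      | zero => simp
      | succ j ih =>
        have hc := CONTRACT (h^[j] w₀) (hiter j) wst hwstD
        rw [hfix] at hc
        calc ehRho D (h^[j+1] w₀) wst = ehRho D (h (h^[j] w₀)) wst := by
              rw [Function.iterate_succ_apply']
        _ ≤ q' * ehRho D (h^[j] w₀) wst := hc
        _ ≤ q' * (q'^j * ehRho D w₀ wst) := mul_le_mul_of_nonneg_left ih hq'0
        _ = q'^(j+1) * ehRho D w₀ wst := by ring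
    have hupper1 : ehRho D w₀ (h w₀) ≤ ‖h w₀ - w₀‖/ε :=
      ehRho_le_deep hconv hε hw₀D (hmaps hw₀D)
        (hdeepseg w₀ (h w₀) hw₀ball (hball w₀ hw₀D))
    have htri : ehRho D w₀ wst ≤ ehRho D w₀ (h w₀) + ehRho D (h w₀) wst :=
      ehRho_triangle hD hconv hw₀D (hmaps hw₀D) hwstD
    have hc2 : ehRho D (h w₀) wst ≤ q' * ehRho D w₀ wst := by
      have hc := CONTRACT w₀ hw₀D wst hwstD
      rwa [hfix] at hc
    have hρbase : ehRho D w₀ wst ≤ d * ‖h w₀ - w₀‖ / ε^2 := by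
      have h1 : (1 - q') * ehRho D w₀ wst ≤ ‖h w₀ - w₀‖/ε := by linarith
      have h2 : 1 - q' = ε/d := by rw [hq'def]; field_simp; ring
      rw [h2] at h1
      have h5 : (d/ε) * ((ε/d) * ehRho D w₀ wst) = ehRho D w₀ wst := by
        field_simp
      calc ehRho D w₀ wst = (d/ε) * ((ε/d) * ehRho D w₀ wst) := h5.symm
      _ ≤ (d/ε) * (‖h w₀ - w₀‖/ε) := mul_le_mul_of_nonneg_left h1 (by positivity)
      _ = d * ‖h w₀ - w₀‖ / ε^2 := by
          rw [div_mul_div_comm, ← pow_two]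
    have hlow : ‖h^[n] w₀ - wst‖ ≤ M * (d * ehRho D (h^[n-1] w₀) wst) := by
      have he : h^[n] w₀ = h (h^[n-1] w₀) := by
        conv_lhs => rw [show n = (n-1)+1 by omega]
        rw [Function.iterate_succ_apply']
      calc ‖h^[n] w₀ - wst‖ = ‖h (h^[n-1] w₀) - h wst‖ := by rw [he, hfix]
      _ = ‖h wst - h (h^[n-1] w₀)‖ := norm_sub_rev _ _
      _ ≤ M * ‖wst - h^[n-1] w₀‖ := HLip _ (hiter (n-1)) wst hwstD
      _ ≤ M * (d * ehRho D (h^[n-1] w₀) wst) := by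
            apply mul_le_mul_of_nonneg_left _ hM0
            exact ehRho_lower hlt hD hconv (hiter (n-1)) hwstD
    have hq'q : q' ≤ (1 + ε/d)⁻¹ := by
      have he : (1 + ε/d)⁻¹ = d/(d+ε) := by
        rw [one_add_div hd0.ne', inv_div]
      rw [he, hq'def, div_le_div_iff₀ hd0 (by linarith)]
      nlinarith [sq_nonneg ε]
    calc ‖h^[n] w₀ - wst‖ ≤ M * (d * ehRho D (h^[n-1] w₀) wst) := hlow
    _ ≤ M * (d * (q'^(n-1) * ehRho D w₀ wst)) := by
        apply mul_le_mul_of_nonneg_left _ hM0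
        exact mul_le_mul_of_nonneg_left (hrhoiter (n-1)) hd0.le
    _ ≤ M * (d * (q'^(n-1) * (d * ‖h w₀ - w₀‖ / ε^2))) := by
        apply mul_le_mul_of_nonneg_left _ hM0
        apply mul_le_mul_of_nonneg_left _ hd0.le
        exact mul_le_mul_of_nonneg_left hρbase (pow_nonneg hq'0 _)
    _ = M / ε^2 * d^2 * ‖h w₀ - w₀‖ * q'^(n-1) := by ring
    _ ≤ M / ε^2 * d^2 * ‖h w₀ - w₀‖ * ((1 + ε/d)⁻¹)^(n-1) := by
        apply mul_le_mul_of_nonneg_left (pow_le_pow_left₀ hq'0 hq'q _)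
        have : 0 ≤ M / ε^2 := by positivity
        positivity
end

section
/- Let 𝒟 be a nonempty bounded convex open subset of a complex Banach space (E, ‖·‖), and let h : 𝒟 → 𝒟 be a holomorphic map such that dist(h(𝒟), E ∖ 𝒟) ≥ ε for some ε > 0 and such that ‖(Dh)(w)‖ ≤ M < ∞ for all w ∈ 𝒟. Then h has a unique fixed point w* ∈ 𝒟, and for every w₀ ∈ h(𝒟) and every integer n ≥ 1, ‖hⁿ(w₀) − w*‖ ≤ (M/ε²)·diam(𝒟)²·‖hⁿ(w₀) − hⁿ⁻¹(w₀)‖, where hⁿ denotes the n-fold iterate of h. -/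
open Metric Set Function

namespace EHaux

variable {E : Type*} [NormedAddCommGroup E] [NormedSpace ℂ E]

/-- Admissible functions for the Carathéodory metric on `D`. -/
def Adm (D : Set E) (f : E → ℂ) : Prop :=
  DifferentiableOn ℂ f D ∧ ∀ z ∈ D, ‖f z‖ < 1

/-- Infinitesimal Carathéodory metric. -/
noncomputable def car (D : Set E) (w u : E) : ℝ :=
  sSup ((fun f => ‖fderiv ℂ f w u‖) '' {f | Adm D f})

lemma adm_zero (D : Set E) : Adm D (fun _ => (0 : ℂ)) :=
  ⟨differentiableOn_const 0, fun _ _ => by simp⟩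

/-- Cauchy estimate for admissible functions. -/
lemma cauchy_est {D : Set E} (hD : IsOpen D) {f : E → ℂ} (hf : Adm D f)
    {w : E} {r : ℝ} (hr : 0 < r) (hball : ball w r ⊆ D) (u : E) :
    ‖fderiv ℂ f w u‖ ≤ ‖u‖ / r := by
  rcases eq_or_ne u 0 with rfl | hu
  · simp [div_nonneg, hr.le]
  have hwD : w ∈ D := hball (mem_ball_self hr)
  have hun : (0:ℝ) < ‖u‖ := norm_pos_iff.mpr hu
  set e : E := ((r / ‖u‖ : ℝ) : ℂ) • u with he
  have hne : ‖e‖ = r := by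
    rw [he, norm_smul, Complex.norm_real, Real.norm_of_nonneg (by positivity)]
    field_simp
  set φ : ℂ → ℂ := fun ζ => f (w + ζ • e) with hφ
  have hmem : ∀ ζ : ℂ, ζ ∈ ball (0:ℂ) 1 → w + ζ • e ∈ ball w r := by
    intro ζ hζ
    rw [mem_ball_zero_iff] at hζ
    rw [mem_ball, dist_eq_norm, add_sub_cancel_left, norm_smul, hne]
    calc ‖ζ‖ * r < 1 * r := mul_lt_mul_of_pos_right hζ hr
    _ = r := one_mul r
  have hinner : ∀ ζ : ℂ, HasDerivAt (fun ζ : ℂ => w + ζ • e) e ζ := by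
    intro ζ
    simpa using ((hasDerivAt_id ζ).smul_const e).const_add w
  have hφdiff : DifferentiableOn ℂ φ (ball (0:ℂ) 1) := by
    intro ζ hζ
    have h1 : DifferentiableAt ℂ f (w + ζ • e) :=
      (hf.1 _ (hball (hmem ζ hζ))).differentiableAt (hD.mem_nhds (hball (hmem ζ hζ)))
    exact (h1.comp ζ (hinner ζ).differentiableAt).differentiableWithinAt
  have hd0 : HasDerivAt φ (fderiv ℂ f w e) 0 := by
    have h1 : HasFDerivAt f (fderiv ℂ f w) w :=
      ((hf.1 _ hwD).differentiableAt (hD.mem_nhds hwD)).hasFDerivAt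
    have h0 : HasFDerivAt f (fderiv ℂ f w) (w + (0:ℂ) • e) := by simpa using h1
    have := h0.comp_hasDerivAt (0:ℂ) (hinner 0)
    exact this
  have hbound : ∀ s : ℝ, 0 < s → s < 1 → ‖fderiv ℂ f w e‖ ≤ 1 / s := by
    intro s hs hs1
    have hsub : closedBall (0:ℂ) s ⊆ ball (0:ℂ) 1 :=
      (closedBall_subset_ball hs1)
    have hdc : DiffContOnCl ℂ φ (ball (0:ℂ) s) := by
      apply DifferentiableOn.diffContOnCl
      rw [closure_ball (0:ℂ) hs.ne']
      exact hφdiff.mono hsub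
    have hC : ∀ z ∈ sphere (0:ℂ) s, ‖φ z‖ ≤ 1 := by
      intro z hz
      have : z ∈ ball (0:ℂ) 1 := hsub (sphere_subset_closedBall hz)
      exact (hf.2 _ (hball (hmem z this))).le
    have := Complex.norm_deriv_le_of_forall_mem_sphere_norm_le hs hdc hC
    rwa [hd0.deriv] at this
  have he1 : ‖fderiv ℂ f w e‖ ≤ 1 := by
    by_contra hc
    push_neg at hc
    obtain ⟨s, hs1, hs2⟩ := exists_between (show 1/‖fderiv ℂ f w e‖ < 1 by
      rw [div_lt_one (lt_trans one_pos hc)]; exact hc)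
    have hspos : 0 < s := lt_trans (by positivity) hs1
    have := hbound s hspos hs2
    rw [le_div_iff₀ hspos] at this
    have h2 : 1 / ‖fderiv ℂ f w e‖ < s := hs1
    rw [div_lt_iff₀ (lt_trans one_pos hc)] at h2
    nlinarith [lt_trans one_pos hc]
  -- now u = (‖u‖ / r) • e
  have hue : u = ((‖u‖ / r : ℝ) : ℂ) • e := by
    rw [he, smul_smul, ← Complex.ofReal_mul,
      show ‖u‖ / r * (r / ‖u‖) = 1 by field_simp]
    simp
  calc ‖fderiv ℂ f w u‖ = ‖u‖ / r * ‖fderiv ℂ f w e‖ := by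
        conv_lhs => rw [hue]
        rw [map_smul, norm_smul, Complex.norm_real, Real.norm_of_nonneg (by positivity)]
  _ ≤ ‖u‖ / r * 1 := by
        apply mul_le_mul_of_nonneg_left he1 (by positivity)
  _ = ‖u‖ / r := mul_one _


lemma car_bddAbove {D : Set E} (hD : IsOpen D) {w : E} (hw : w ∈ D) (u : E) :
    BddAbove ((fun f => ‖fderiv ℂ f w u‖) '' {f | Adm D f}) := by
  obtain ⟨r, hr, hball⟩ := Metric.isOpen_iff.mp hD w hw
  refine ⟨‖u‖ / r, ?_⟩
  rintro x ⟨f, hf, rfl⟩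
  exact cauchy_est hD hf hr hball u

lemma le_car {D : Set E} (hD : IsOpen D) {f : E → ℂ} (hf : Adm D f) {w : E}
    (hw : w ∈ D) (u : E) : ‖fderiv ℂ f w u‖ ≤ car D w u :=
  le_csSup (car_bddAbove hD hw u) ⟨f, hf, rfl⟩

lemma car_le {D : Set E} {w u : E} {b : ℝ}
    (hb : ∀ f, Adm D f → ‖fderiv ℂ f w u‖ ≤ b) : car D w u ≤ b := by
  refine csSup_le ⟨_, Set.mem_image_of_mem _ (adm_zero D)⟩ ?_
  rintro x ⟨f, hf, rfl⟩
  exact hb f hf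

lemma car_nonneg {D : Set E} (hD : IsOpen D) {w : E} (hw : w ∈ D) (u : E) :
    0 ≤ car D w u := by
  have := le_car hD (adm_zero D) hw u
  simpa using this

lemma car_upper {D : Set E} (hD : IsOpen D) {w : E} {r : ℝ} (hr : 0 < r)
    (hball : ball w r ⊆ D) (u : E) : car D w u ≤ ‖u‖ / r :=
  car_le fun f hf => cauchy_est hD hf hr hball u

lemma car_smul_le {D : Set E} (hD : IsOpen D) {w : E} (hw : w ∈ D) (c : ℂ) (u : E) :
    car D w (c • u) ≤ ‖c‖ * car D w u := by
  apply car_le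
  intro f hf
  rw [map_smul, norm_smul]
  exact mul_le_mul_of_nonneg_left (le_car hD hf hw u) (norm_nonneg c)

lemma car_lower {D : Set E} (hD : IsOpen D) (hbdd : Bornology.IsBounded D)
    {w : E} (hw : w ∈ D) (u : E) : ‖u‖ ≤ Metric.diam D * car D w u := by
  rcases eq_or_ne u 0 with rfl | hu
  · simpa using mul_nonneg Metric.diam_nonneg (car_nonneg hD hw (0:E))
  have hun : (0:ℝ) < ‖u‖ := norm_pos_iff.mpr hu
  obtain ⟨ℓ, hℓ1, hℓu⟩ := exists_dual_vector ℂ u (norm_ne_zero_iff.mpr hu)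
  have key : ∀ η : ℝ, 0 < η → ‖u‖ ≤ (Metric.diam D + η) * car D w u := by
    intro η hη
    have hdη : (0:ℝ) < Metric.diam D + η := by
      have := Metric.diam_nonneg (s := D); linarith
    set c : ℂ := (((Metric.diam D + η)⁻¹ : ℝ) : ℂ) with hc
    set f : E → ℂ := fun z => c • ℓ (z - w) with hfdef
    have hadm : Adm D f := by
      constructor
      · exact (((ℓ.differentiable).comp (differentiable_id.sub_const w)).const_smul
          c).differentiableOn
      · intro z hz
        rw [hfdef]
        simp only [norm_smul, hc, Complex.norm_real, Real.norm_eq_abs,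
          abs_of_nonneg (inv_nonneg.mpr hdη.le)]
        have h1 : ‖ℓ (z - w)‖ ≤ ‖z - w‖ := by
          calc ‖ℓ (z - w)‖ ≤ ‖ℓ‖ * ‖z - w‖ := ℓ.le_opNorm _
          _ = ‖z - w‖ := by rw [hℓ1, one_mul]
        have h2 : ‖z - w‖ ≤ Metric.diam D := by
          rw [← dist_eq_norm]
          exact Metric.dist_le_diam_of_mem hbdd hz hw
        calc (Metric.diam D + η)⁻¹ * ‖ℓ (z - w)‖
            ≤ (Metric.diam D + η)⁻¹ * Metric.diam D := by
              apply mul_le_mul_of_nonneg_left (h1.trans h2) (inv_nonneg.mpr hdη.le)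
        _ < 1 := by rw [inv_mul_lt_iff₀ hdη]; linarith
    have hder : HasFDerivAt f (c • (ℓ : E →L[ℂ] ℂ)) w := by
      have l1 : HasFDerivAt (fun z : E => ℓ (z - w)) (ℓ : E →L[ℂ] ℂ) w := by
        have := ℓ.hasFDerivAt.comp w ((hasFDerivAt_id w).sub_const w)
        rw [ContinuousLinearMap.comp_id] at this
        exact this
      exact l1.const_smul c
    have hval : ‖fderiv ℂ f w u‖ = (Metric.diam D + η)⁻¹ * ‖u‖ := by
      rw [hder.fderiv]
      simp only [ContinuousLinearMap.coe_smul', Pi.smul_apply, hℓu, norm_smul, hc,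
        Complex.norm_real, Real.norm_eq_abs, abs_of_nonneg (inv_nonneg.mpr hdη.le),
        Complex.norm_real]
      norm_num
    have := le_car hD hadm hw u
    rw [hval] at this
    calc ‖u‖ = (Metric.diam D + η) * ((Metric.diam D + η)⁻¹ * ‖u‖) := by
          field_simp
    _ ≤ (Metric.diam D + η) * car D w u := by
          exact mul_le_mul_of_nonneg_left this hdη.le
  rcases (car_nonneg hD hw u).eq_or_lt with hcar | hcar
  · have := key 1 one_pos
    rw [← hcar] at this
    simp at this
    exact absurd this hu
  · by_contra hcon
    push_neg at hcon
    have hpos : 0 < (‖u‖ - Metric.diam D * car D w u) / (2 * car D w u) :=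
      div_pos (by linarith) (by positivity)
    have hkey := key _ hpos
    have hexp : (‖u‖ - Metric.diam D * car D w u) / (2 * car D w u) * car D w u
        = (‖u‖ - Metric.diam D * car D w u) / 2 := by
      field_simp
    nlinarith [hexp]

lemma car_contract {D : Set E} (hD : IsOpen D) {g : E → E} (hg : DifferentiableOn ℂ g D)
    (hgm : MapsTo g D D) {w : E} (hw : w ∈ D) {G : E →L[ℂ] E}
    (hG : HasFDerivAt g G w) (u : E) : car D (g w) (G u) ≤ car D w u := by
  apply car_le
  intro f hf
  have hfd : DifferentiableAt ℂ f (g w) :=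
    (hf.1 _ (hgm hw)).differentiableAt (hD.mem_nhds (hgm hw))
  have hcomp : HasFDerivAt (f ∘ g) ((fderiv ℂ f (g w)).comp G) w :=
    hfd.hasFDerivAt.comp w hG
  have hadm : Adm D (f ∘ g) := by
    constructor
    · exact hf.1.comp hg hgm
    · intro z hz; exact hf.2 _ (hgm hz)
  have := le_car hD hadm hw u
  rwa [hcomp.fderiv] at this


lemma ball_sub {D : Set E} {ε : ℝ} {v : E} (hv : ∀ y ∈ Dᶜ, ε ≤ ‖v - y‖) :
    ball v ε ⊆ D := by
  intro z hz
  by_contra hzD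
  have := hv z hzD
  rw [mem_ball, dist_eq_norm, ← norm_sub_rev] at hz
  linarith

lemma two_eps_le_diam [Nontrivial E] {D : Set E} (hbdd : Bornology.IsBounded D)
    {ε : ℝ} (hε : 0 < ε) {p : E} (hball : ball p ε ⊆ D) :
    2 * ε ≤ Metric.diam D := by
  obtain ⟨u, hu⟩ := exists_norm_eq E (zero_le_one' ℝ)
  have step : ∀ r : ℝ, 0 < r → r < ε → 2 * r ≤ Metric.diam D := by
    intro r hr hrε
    have h1 : p + r • u ∈ D := hball (by
      rw [mem_ball, dist_eq_norm, add_sub_cancel_left, norm_smul, hu,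
        Real.norm_of_nonneg hr.le, mul_one]; exact hrε)
    have h2 : p - r • u ∈ D := hball (by
      rw [mem_ball, dist_eq_norm, sub_sub_cancel_left, norm_neg, norm_smul, hu,
        Real.norm_of_nonneg hr.le, mul_one]; exact hrε)
    have := Metric.dist_le_diam_of_mem hbdd h1 h2
    rw [dist_eq_norm, show p + r • u - (p - r • u) = (2 * r) • u by module,
      norm_smul, hu, Real.norm_of_nonneg (by positivity), mul_one] at this
    exact this
  by_contra hcon
  push_neg at hcon
  have hd0 : 0 ≤ Metric.diam D := Metric.diam_nonneg
  set r := (Metric.diam D / 2 + ε) / 2 with hrdef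
  have h1 : Metric.diam D / 2 < ε := by linarith
  have := step r (by positivity) (by rw [hrdef]; linarith)
  rw [hrdef] at this
  linarith

lemma dist_le_diam_sub {D : Set E} (hbdd : Bornology.IsBounded D) {ε : ℝ} (hε : 0 < ε)
    {p q : E} (hp : ball p ε ⊆ D) (hq : ball q ε ⊆ D)
    (h2ε : 2 * ε ≤ Metric.diam D) : ‖p - q‖ ≤ Metric.diam D - 2 * ε := by
  rcases eq_or_ne p q with rfl | hpq
  · simp; linarith
  set d := ‖p - q‖ with hd
  have hdpos : 0 < d := norm_pos_iff.mpr (sub_ne_zero.mpr hpq)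
  set u : E := d⁻¹ • (p - q) with hu
  have hun : ‖u‖ = 1 := by
    rw [hu, norm_smul, Real.norm_of_nonneg (by positivity), ← hd]
    field_simp
  have hdu : d • u = p - q := by
    rw [hu, smul_smul, mul_inv_cancel₀ hdpos.ne', one_smul]
  have step : ∀ r : ℝ, 0 < r → r < ε → d + 2 * r ≤ Metric.diam D := by
    intro r hr hrε
    have h1 : p + r • u ∈ D := hp (by
      rw [mem_ball, dist_eq_norm, add_sub_cancel_left, norm_smul, hun,
        Real.norm_of_nonneg hr.le, mul_one]; exact hrε)
    have h2 : q - r • u ∈ D := hq (by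
      rw [mem_ball, dist_eq_norm, sub_sub_cancel_left, norm_neg, norm_smul, hun,
        Real.norm_of_nonneg hr.le, mul_one]; exact hrε)
    have hdist := Metric.dist_le_diam_of_mem hbdd h1 h2
    have heq : p + r • u - (q - r • u) = (d + 2 * r) • u := by
      rw [add_smul, hdu]; module
    rw [dist_eq_norm, heq, norm_smul, hun, Real.norm_of_nonneg (by positivity),
      mul_one] at hdist
    exact hdist
  by_contra hcon
  push_neg at hcon
  have h0 : d + ε ≤ Metric.diam D := by
    have := step (ε / 2) (by positivity) (by linarith)
    linarith
  set r := ((Metric.diam D - d) / 2 + ε) / 2 with hrdef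
  have h1 : (Metric.diam D - d) / 2 < ε := by linarith
  have h2 : 0 < (Metric.diam D - d) / 2 := by linarith
  have := step r (by rw [hrdef]; linarith) (by rw [hrdef]; linarith)
  rw [hrdef] at this
  linarith


lemma car_key {D : Set E} (hD : IsOpen D) (hbdd : Bornology.IsBounded D)
    {h : E → E} {h' : E → E →L[ℂ] E} (hmaps : Set.MapsTo h D D)
    (hdiff : ∀ w ∈ D, HasFDerivAt h (h' w) w)
    {ε : ℝ} (hε : 0 < ε) (hdist : ∀ x ∈ D, ∀ y ∈ Dᶜ, ε ≤ ‖h x - y‖)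
    (h2ε : 2 * ε ≤ Metric.diam D)
    (himg : ∀ w ∈ D, ∀ x ∈ D, ‖h w - h x‖ ≤ Metric.diam D - 2 * ε)
    {w : E} (hw : w ∈ D) (u : E) :
    car D (h w) (h' w u) ≤
      (Metric.diam D - ε) / Metric.diam D * car D w u := by
  set δ := Metric.diam D with hδ
  have hδpos : 0 < δ := lt_of_lt_of_le (by linarith) h2ε
  have hδε : 0 < δ - ε := by linarith
  set t : ℝ := ε / (δ - ε) with ht
  have htpos : 0 < t := by positivity
  set T : ℂ := ((t : ℝ) : ℂ) with hT
  have h1T : (1 : ℂ) + T = ((1 + t : ℝ) : ℂ) := by push_cast; ring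
  have h1Tnorm : ‖(1 : ℂ) + T‖ = 1 + t := by
    rw [h1T, Complex.norm_real, Real.norm_of_nonneg (by linarith)]
  have h1Tne : (1 : ℂ) + T ≠ 0 := by
    intro hc; rw [hc] at h1Tnorm; simp at h1Tnorm; linarith
  have hdiffOn : DifferentiableOn ℂ h D := fun z hz =>
    (hdiff z hz).differentiableAt.differentiableWithinAt
  set g : E → E := fun z => (1 + T) • h z - T • h w with hg
  have hgm : Set.MapsTo g D D := by
    intro z hz
    have hzw : g z = h z + T • (h z - h w) := by rw [hg]; module
    have hnorm : ‖g z - h z‖ = t * ‖h z - h w‖ := by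
      rw [hzw, add_sub_cancel_left, norm_smul, hT, Complex.norm_real,
        Real.norm_of_nonneg htpos.le]
    have hb : ‖g z - h z‖ < ε := by
      rw [hnorm]
      calc t * ‖h z - h w‖ ≤ t * (δ - 2 * ε) :=
            mul_le_mul_of_nonneg_left (himg z hz w hw) htpos.le
      _ < ε := by
            rw [ht, div_mul_eq_mul_div, div_lt_iff₀ hδε]
            nlinarith
    have : g z ∈ ball (h z) ε := by
      rw [mem_ball, dist_eq_norm]; exact hb
    exact ball_sub (hdist z hz) this
  have hgdiff : DifferentiableOn ℂ g D :=
    (hdiffOn.const_smul ((1 : ℂ) + T)).sub_const (T • h w)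
  have hG : HasFDerivAt g ((1 + T) • h' w) w :=
    ((hdiff w hw).const_smul ((1 : ℂ) + T)).sub_const (T • h w)
  have hgw : g w = h w := by rw [hg]; module
  have hcontract := car_contract hD hgdiff hgm hw hG u
  rw [hgw] at hcontract
  have happ : ((1 + T) • h' w) u = (1 + T) • (h' w u) := rfl
  rw [happ] at hcontract
  have hmem : h w ∈ D := hmaps hw
  have hsmul : car D (h w) (h' w u) ≤ (1 + t)⁻¹ * car D (h w) ((1 + T) • (h' w u)) := by
    have := car_smul_le hD hmem ((1 + T)⁻¹) ((1 + T) • (h' w u))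
    rw [inv_smul_smul₀ h1Tne, norm_inv, h1Tnorm] at this
    exact this
  calc car D (h w) (h' w u) ≤ (1 + t)⁻¹ * car D (h w) ((1 + T) • (h' w u)) := hsmul
  _ ≤ (1 + t)⁻¹ * car D w u := by
      apply mul_le_mul_of_nonneg_left hcontract (by positivity)
  _ = (δ - ε) / δ * car D w u := by
      congr 1
      rw [ht]
      field_simp
      ring


lemma iter_est {D : Set E} (hD : IsOpen D) (hbdd : Bornology.IsBounded D)
    (hconv : Convex ℝ D) {h : E → E} {h' : E → E →L[ℂ] E}
    (hmaps : Set.MapsTo h D D) (hdiff : ∀ w ∈ D, HasFDerivAt h (h' w) w)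
    {ε M : ℝ} (hε : 0 < ε) (hdist : ∀ x ∈ D, ∀ y ∈ Dᶜ, ε ≤ ‖h x - y‖)
    (hM : ∀ w ∈ D, ‖h' w‖ ≤ M) (h2ε : 2 * ε ≤ Metric.diam D)
    (himg : ∀ w ∈ D, ∀ x ∈ D, ‖h w - h x‖ ≤ Metric.diam D - 2 * ε)
    {x y : E} (hx : ball x ε ⊆ D) (hy : ball y ε ⊆ D) (m : ℕ) :
    ‖h^[m + 1] y - h^[m + 1] x‖ ≤
      M * (Metric.diam D * (((Metric.diam D - ε) / Metric.diam D) ^ m *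
        (‖y - x‖ / ε))) := by
  set δ := Metric.diam D with hδ
  set k₀ : ℝ := (δ - ε) / δ with hk₀
  have hδpos : 0 < δ := lt_of_lt_of_le (by linarith) h2ε
  have hk₀nonneg : 0 ≤ k₀ := div_nonneg (by linarith) hδpos.le
  have tube : ∀ s ∈ Icc (0:ℝ) 1, ball (x + s • (y - x)) ε ⊆ D := by
    rintro s ⟨hs0, hs1⟩ z hz
    set v := z - (x + s • (y - x)) with hv
    have hvn : ‖v‖ < ε := by
      rw [hv, ← dist_eq_norm]; exact mem_ball.mp hz
    have hz1 : x + v ∈ D := hx (by rw [mem_ball, dist_eq_norm, add_sub_cancel_left]; exact hvn)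
    have hz2 : y + v ∈ D := hy (by rw [mem_ball, dist_eq_norm, add_sub_cancel_left]; exact hvn)
    have hzeq : z = (1 - s) • (x + v) + s • (y + v) := by
      rw [hv]; module
    rw [hzeq]
    exact hconv hz1 hz2 (by linarith) hs0 (by ring)
  have memD : ∀ (k : ℕ), ∀ s ∈ Icc (0:ℝ) 1, h^[k] (x + s • (y - x)) ∈ D := by
    intro k s hs
    exact hmaps.iterate k (tube s hs (mem_ball_self hε))
  have claim : ∀ (k : ℕ), ∀ s ∈ Icc (0:ℝ) 1, ∃ v : E,
      HasDerivAt (fun σ : ℝ => h^[k] (x + σ • (y - x))) v s ∧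
      car D (h^[k] (x + s • (y - x))) v ≤ k₀ ^ k * (‖y - x‖ / ε) := by
    intro k
    induction k with
    | zero =>
      intro s hs
      refine ⟨y - x, ?_, ?_⟩
      · simp only [Function.iterate_zero, id_eq]
        simpa using ((hasDerivAt_id s).smul_const (y - x)).const_add x
      · simp only [Function.iterate_zero, id_eq, pow_zero, one_mul]
        exact car_upper hD hε (tube s hs) (y - x)
    | succ k ih =>
      intro s hs
      obtain ⟨v, hv, hcar⟩ := ih s hs
      set w := h^[k] (x + s • (y - x)) with hw
      have hwD : w ∈ D := memD k s hs
      refine ⟨h' w (v), ?_, ?_⟩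
      · have := ((hdiff w hwD).restrictScalars ℝ).comp_hasDerivAt s hv
        have heq : (fun σ : ℝ => h^[k + 1] (x + σ • (y - x)))
            = fun σ : ℝ => h (h^[k] (x + σ • (y - x))) := by
          funext σ; rw [Function.iterate_succ_apply']
        rw [heq]
        exact this
      · rw [Function.iterate_succ_apply', ← hw]
        calc car D (h w) (h' w v) ≤ k₀ * car D w v :=
              car_key hD hbdd hmaps hdiff hε hdist h2ε himg hwD v
        _ ≤ k₀ * (k₀ ^ k * (‖y - x‖ / ε)) :=
              mul_le_mul_of_nonneg_left hcar hk₀nonneg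
        _ = k₀ ^ (k + 1) * (‖y - x‖ / ε) := by ring
  choose! v hv hcar using claim m
  set C := M * (δ * (k₀ ^ m * (‖y - x‖ / ε))) with hC
  have hfd : ∀ s ∈ Icc (0:ℝ) 1, HasDerivWithinAt
      (fun σ : ℝ => h^[m + 1] (x + σ • (y - x)))
      (h' (h^[m] (x + s • (y - x))) (v s)) (Icc (0:ℝ) 1) s := by
    intro s hs
    have := (((hdiff _ (memD m s hs)).restrictScalars ℝ).comp_hasDerivAt s
      (hv s hs)).hasDerivWithinAt (s := Icc (0:ℝ) 1)
    have heq : (fun σ : ℝ => h^[m + 1] (x + σ • (y - x)))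
        = fun σ : ℝ => h (h^[m] (x + σ • (y - x))) := by
      funext σ; rw [Function.iterate_succ_apply']
    rw [heq]
    exact this
  have hbound : ∀ s ∈ Ico (0:ℝ) 1, ‖h' (h^[m] (x + s • (y - x))) (v s)‖ ≤ C := by
    intro s hs
    have hs' : s ∈ Icc (0:ℝ) 1 := Ico_subset_Icc_self hs
    have hwD := memD m s hs'
    calc ‖h' (h^[m] (x + s • (y - x))) (v s)‖
        ≤ ‖h' (h^[m] (x + s • (y - x)))‖ * ‖v s‖ := ContinuousLinearMap.le_opNorm _ _
    _ ≤ M * ‖v s‖ :=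
        mul_le_mul_of_nonneg_right (hM _ hwD) (norm_nonneg _)
    _ ≤ M * (δ * (k₀ ^ m * (‖y - x‖ / ε))) := by
        apply mul_le_mul_of_nonneg_left _ ((norm_nonneg (h' _)).trans (hM _ hwD))
        calc ‖v s‖ ≤ δ * car D (h^[m] (x + s • (y - x))) (v s) :=
              car_lower hD hbdd hwD (v s)
        _ ≤ δ * (k₀ ^ m * (‖y - x‖ / ε)) :=
              mul_le_mul_of_nonneg_left (hcar s hs') hδpos.le
  have := norm_image_sub_le_of_norm_deriv_le_segment_01' hfd hbound
  have h1 : x + (1:ℝ) • (y - x) = y := by module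
  have h0 : x + (0:ℝ) • (y - x) = x := by module
  rw [h1, h0] at this
  exact this

end EHaux



open EHaux Filter in
/-- Quantitative Earle–Hamilton theorem, a posteriori bound: a holomorphic map
`h` of a nonempty bounded convex open set `𝒟` strictly into itself (at distance `≥ ε` from the
complement) with derivative bounded by `M` has a unique fixed point `w*`, and the iterates
starting from any `w₀ ∈ h(𝒟)` satisfy
`‖hⁿ(w₀) − w*‖ ≤ (M/ε²)·diam(𝒟)²·‖hⁿ(w₀) − hⁿ⁻¹(w₀)‖` for all `n ≥ 1`. -/
theorem earle_hamilton_a_posteriori {E : Type*} [NormedAddCommGroup E] [NormedSpace ℂ E]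
    [CompleteSpace E] (D : Set E) (hD : IsOpen D) (hne : D.Nonempty)
    (hbdd : Bornology.IsBounded D) (hconv : Convex ℝ D)
    (h : E → E) (h' : E → E →L[ℂ] E)
    (hmaps : Set.MapsTo h D D)
    (hdiff : ∀ w ∈ D, HasFDerivAt h (h' w) w)
    (ε M : ℝ) (hε : 0 < ε)
    (hdist : ∀ x ∈ D, ∀ y ∈ Dᶜ, ε ≤ ‖h x - y‖)
    (hM : ∀ w ∈ D, ‖h' w‖ ≤ M) :
    ∃ wst ∈ D, h wst = wst ∧ (∀ w ∈ D, h w = w → w = wst) ∧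
      ∀ w₀ ∈ h '' D, ∀ n : ℕ, 1 ≤ n →
        ‖h^[n] w₀ - wst‖ ≤
          M / ε ^ 2 * Metric.diam D ^ 2 * ‖h^[n] w₀ - h^[n - 1] w₀‖ := by
  rcases subsingleton_or_nontrivial E with hsub | hnt
  · obtain ⟨w0, hw0⟩ := hne
    refine ⟨w0, hw0, Subsingleton.elim _ _, fun w hw _ => Subsingleton.elim _ _, ?_⟩
    intro w₀ _ n _
    have e1 : h^[n] w₀ - w0 = 0 := Subsingleton.elim _ _
    have e2 : h^[n] w₀ - h^[n-1] w₀ = 0 := Subsingleton.elim _ _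
    rw [e1, e2]
    simp
  set δ := Metric.diam D with hδ
  set k₀ : ℝ := (δ - ε)/δ with hk₀
  obtain ⟨z₀, hz₀⟩ := hne
  have hball_img : ∀ x ∈ D, Metric.ball (h x) ε ⊆ D := fun x hx => ball_sub (hdist x hx)
  have h2ε : 2*ε ≤ δ := two_eps_le_diam hbdd hε (hball_img z₀ hz₀)
  have himg : ∀ w ∈ D, ∀ x ∈ D, ‖h w - h x‖ ≤ δ - 2*ε := fun w hw x hx =>
    dist_le_diam_sub hbdd hε (hball_img w hw) (hball_img x hx) h2ε
  have hδpos : 0 < δ := lt_of_lt_of_le (by linarith) h2ε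
  have hk₀0 : 0 ≤ k₀ := div_nonneg (by linarith) hδpos.le
  have hk₀1 : k₀ < 1 := by rw [hk₀, div_lt_one hδpos]; linarith
  have hk₀pos : 0 < k₀ := div_pos (by linarith) hδpos
  have hM0 : 0 ≤ M := (norm_nonneg _).trans (hM z₀ hz₀)
  have B : ∀ x y : E, x ∈ h '' D → y ∈ h '' D → ∀ m : ℕ,
      ‖h^[m+1] y - h^[m+1] x‖ ≤ M * (δ * (k₀^m * (‖y - x‖/ε))) := by
    rintro x y ⟨a, ha, rfl⟩ ⟨b, hb, rfl⟩ m
    exact iter_est hD hbdd hconv hmaps hdiff hε hdist hM h2ε himg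
      (hball_img a ha) (hball_img b hb) m
  set z := h z₀ with hz
  have hzD : z ∈ D := hmaps hz₀
  have hzimg : z ∈ h '' D := ⟨z₀, hz₀, rfl⟩
  have hhzimg : h z ∈ h '' D := ⟨z, hzD, rfl⟩
  have hseq_img : ∀ n : ℕ, h^[n] z ∈ h '' D := by
    intro n
    rw [hz, ← Function.iterate_succ_apply, Function.iterate_succ_apply']
    exact ⟨h^[n] z₀, hmaps.iterate n hz₀, rfl⟩
  -- Cauchy sequence of iterates
  have hcau : CauchySeq (fun n => h^[n] z) := by
    apply cauchySeq_of_le_geometric k₀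
      (max (dist z (h z)) (M * (δ * (‖h z - z‖/ε)) / k₀)) hk₀1
    intro n
    cases n with
    | zero => simpa using le_max_left _ _
    | succ m =>
      have hest := B z (h z) hzimg hhzimg m
      have heq : h^[m+1+1] z = h^[m+1] (h z) := Function.iterate_succ_apply h (m+1) z
      rw [dist_eq_norm, heq, norm_sub_rev]
      calc ‖h^[m+1] (h z) - h^[m+1] z‖ ≤ M * (δ * (k₀^m * (‖h z - z‖/ε))) := hest
      _ = M * (δ * (‖h z - z‖/ε)) / k₀ * k₀^(m+1) := by
          field_simp
          ring
      _ ≤ max (dist z (h z)) (M * (δ * (‖h z - z‖/ε)) / k₀) * k₀^(m+1) :=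
          mul_le_mul_of_nonneg_right (le_max_right _ _) (pow_nonneg hk₀0 _)
  obtain ⟨wst, hwst⟩ := cauchySeq_tendsto_of_complete hcau
  have hwstD : wst ∈ D := by
    by_contra hc
    have hge : ∀ n : ℕ, ε ≤ dist (h^[n] z) wst := by
      intro n
      obtain ⟨a, ha, hae⟩ := hseq_img n
      rw [dist_eq_norm, ← hae]
      exact hdist a ha wst hc
    have htd : Tendsto (fun n => dist (h^[n] z) wst) atTop (nhds 0) :=
      tendsto_iff_dist_tendsto_zero.mp hwst
    have := ge_of_tendsto htd (Eventually.of_forall hge)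
    linarith
  have hfix : h wst = wst := by
    have hcont : ContinuousAt h wst := (hdiff wst hwstD).differentiableAt.continuousAt
    have h1 : Tendsto (fun n => h^[n+1] z) atTop (nhds wst) :=
      (tendsto_add_atTop_iff_nat 1).mpr hwst
    have h2 : Tendsto (fun n => h (h^[n] z)) atTop (nhds (h wst)) :=
      hcont.tendsto.comp hwst
    have heq : (fun n => h (h^[n] z)) = fun n => h^[n+1] z := by
      funext n; rw [Function.iterate_succ_apply']
    rw [heq] at h2
    exact tendsto_nhds_unique h2 h1
  have hwstimg : wst ∈ h '' D := ⟨wst, hwstD, hfix⟩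
  -- convergence to wst from any starting point in h '' D
  have hconv_from : ∀ a, a ∈ h '' D → Tendsto (fun m => h^[m] a) atTop (nhds wst) := by
    intro a haimg
    rw [← tendsto_add_atTop_iff_nat 1]
    apply tendsto_iff_dist_tendsto_zero.mpr
    apply squeeze_zero (fun m => dist_nonneg)
      (g := fun m => M * (δ * (‖a - wst‖/ε)) * k₀^m)
    · intro m
      have hest := B wst a hwstimg haimg m
      have hfixiter : h^[m+1] wst = wst := Function.iterate_fixed hfix (m+1)
      rw [hfixiter] at hest
      rw [dist_eq_norm]
      calc ‖h^[m+1] a - wst‖ ≤ M * (δ * (k₀^m * (‖a - wst‖/ε))) := hest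
      _ = M * (δ * (‖a - wst‖/ε)) * k₀^m := by ring
    · have := (tendsto_pow_atTop_nhds_zero_of_lt_one hk₀0 hk₀1).const_mul
        (M * (δ * (‖a - wst‖/ε)))
      simpa using this
  refine ⟨wst, hwstD, hfix, ?_, ?_⟩
  · intro w hw hfw
    have hwimg : w ∈ h '' D := ⟨w, hw, hfw⟩
    have h1 : Tendsto (fun m => h^[m] w) atTop (nhds wst) := hconv_from w hwimg
    have heq : (fun m : ℕ => h^[m] w) = fun _ => w :=
      funext fun m => Function.iterate_fixed hfw m
    rw [heq] at h1
    exact tendsto_nhds_unique tendsto_const_nhds h1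
  · intro w₀ hw₀ n hn
    obtain ⟨z₁, hz₁, hz₁e⟩ := hw₀
    have himg_of : ∀ k : ℕ, h^[k] w₀ ∈ h '' D := by
      intro k
      rw [← hz₁e, ← Function.iterate_succ_apply, Function.iterate_succ_apply']
      exact ⟨_, hmaps.iterate k hz₁, rfl⟩
    set a := h^[n] w₀ with ha
    set b := h^[n-1] w₀ with hb
    have haimg : a ∈ h '' D := himg_of n
    have hbimg : b ∈ h '' D := himg_of (n-1)
    have hab : a = h b := by
      rw [ha, hb, ← Function.iterate_succ_apply' h (n-1) w₀]
      congr 1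
      omega
    have hterm : ∀ j : ℕ, ‖h^[j] a - h^[j+1] a‖ ≤ k₀^j * (M * (δ * (‖b - a‖/ε))) := by
      intro j
      have h1 : h^[j] a = h^[j+1] b := by rw [hab, ← Function.iterate_succ_apply]
      rw [h1]
      calc ‖h^[j+1] b - h^[j+1] a‖ ≤ M * (δ * (k₀^j * (‖b - a‖/ε))) := B a b haimg hbimg j
      _ = k₀^j * (M * (δ * (‖b - a‖/ε))) := by ring
    have hP0 : 0 ≤ M * (δ * (‖b - a‖/ε)) := by positivity
    have hsumle : ∀ mm : ℕ, (∑ j ∈ Finset.range mm, k₀^j) ≤ 1/(1-k₀) := by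
      intro mm
      have hne1 : k₀ ≠ 1 := ne_of_lt hk₀1
      have heq1 : (∑ j ∈ Finset.range mm, k₀^j) = (1 - k₀^mm)/(1-k₀) := by
        rw [geom_sum_eq hne1, ← neg_div_neg_eq]
        ring_nf
      rw [heq1]
      gcongr
      · have : 0 ≤ k₀^mm := pow_nonneg hk₀0 mm
        linarith
    have hpartial : ∀ mm : ℕ, ‖a - h^[mm] a‖ ≤ (1/(1-k₀)) * (M * (δ * (‖b - a‖/ε))) := by
      intro mm
      have hstep : ‖a - h^[mm] a‖ ≤
          (∑ j ∈ Finset.range mm, k₀^j) * (M * (δ * (‖b - a‖/ε))) := by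
        induction mm with
        | zero => simp
        | succ mm ih =>
          calc ‖a - h^[mm+1] a‖ ≤ ‖a - h^[mm] a‖ + ‖h^[mm] a - h^[mm+1] a‖ := by
                rw [show a - h^[mm+1] a = (a - h^[mm] a) + (h^[mm] a - h^[mm+1] a) by abel]
                exact norm_add_le _ _
          _ ≤ (∑ j ∈ Finset.range mm, k₀^j) * (M * (δ * (‖b - a‖/ε)))
              + k₀^mm * (M * (δ * (‖b - a‖/ε))) := add_le_add ih (hterm mm)
          _ = (∑ j ∈ Finset.range (mm+1), k₀^j) * (M * (δ * (‖b - a‖/ε))) := by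
                rw [Finset.sum_range_succ, add_mul]
      exact hstep.trans (mul_le_mul_of_nonneg_right (hsumle mm) hP0)
    have hlim : Tendsto (fun mm => ‖a - h^[mm] a‖) atTop (nhds ‖a - wst‖) :=
      ((hconv_from a haimg).const_sub a).norm
    have hfinal : ‖a - wst‖ ≤ (1/(1-k₀)) * (M * (δ * (‖b - a‖/ε))) :=
      le_of_tendsto hlim (Eventually.of_forall hpartial)
    have hsimp : (1/(1-k₀)) * (M * (δ * (‖b - a‖/ε))) = M / ε^2 * δ^2 * ‖a - b‖ := by
      rw [norm_sub_rev b a, hk₀]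
      have h1 : 1 - (δ - ε)/δ = ε/δ := by field_simp; ring
      rw [h1]
      field_simp
    rw [hsimp] at hfinal
    exact hfinal
end

section
/- Let (𝓐, E, 𝓑) be as in the context, let x ∈ 𝓐 be selfadjoint, and let b₁, b₂ ∈ H⁺(𝓑). Then b₁ − x and b₂ − x are invertible in 𝓐 and ‖E[(b₁ − x)⁻¹] − E[(b₂ − x)⁻¹]‖ ≤ ‖Im(b₁)⁻¹‖·‖Im(b₂)⁻¹‖·‖b₁ − b₂‖. -/
/-- The imaginary part `Im(b) = (b − b*)/(2i)` of an element of a C*-algebra. -/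
noncomputable def imPart {A : Type*} [CStarAlgebra A] (b : A) : A :=
  ((2 : ℂ) * Complex.I)⁻¹ • (b - star b)

/-- The upper half-plane `H⁺ = {b : ∃ ε > 0, Im(b) ≥ ε·1}`. -/
def upperHalfPlane (A : Type*) [CStarAlgebra A] [PartialOrder A] : Set A :=
  {b | ∃ ε : ℝ, 0 < ε ∧ (ε : ℂ) • (1 : A) ≤ imPart b}

section aux
variable {A : Type*} [CStarAlgebra A]

lemma imPart_isSelfAdjoint (c : A) : IsSelfAdjoint (imPart c) := by
  rw [IsSelfAdjoint, imPart, star_smul, star_sub, star_star, ← neg_sub c (star c), smul_neg]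
  simp [Complex.conj_I, neg_inv]

lemma two_I_smul_imPart (c : A) : ((2:ℂ) * Complex.I) • imPart c = c - star c := by
  rw [imPart, smul_smul, mul_inv_cancel₀ (by simp [Complex.I_ne_zero]), one_smul]

lemma rePart_isSelfAdjoint (c : A) : IsSelfAdjoint (c - Complex.I • imPart c) := by
  rw [IsSelfAdjoint, star_sub, star_smul, (imPart_isSelfAdjoint c).star_eq,
    (by simp : star Complex.I = -Complex.I)]
  linear_combination (norm := module) two_I_smul_imPart c

lemma quad_expand₁ (m k : A) (hmsa : IsSelfAdjoint m) (hksa : IsSelfAdjoint k)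
    (K : Aˣ) (hK : (K : A) = k) :
    (m + Complex.I • k) * ↑K⁻¹ * star (m + Complex.I • k) = m * (↑K⁻¹ * m) + k := by
  have h1 : (↑K⁻¹ : A) * k = 1 := by rw [← hK]; exact K.inv_mul
  have h3 : ∀ y : A, k * (↑K⁻¹ * y) = y := by
    intro y; rw [← mul_assoc, ← hK, K.mul_inv, one_mul]
  rw [star_add, star_smul, hmsa.star_eq, hksa.star_eq, (by simp : star Complex.I = -Complex.I)]
  simp only [add_mul, mul_add, smul_mul_assoc, mul_smul_comm, mul_assoc, h1, h3, mul_one,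
    smul_smul, neg_smul, mul_neg, Complex.I_mul_I, neg_neg, one_smul, neg_mul]
  match_scalars <;> simp [Complex.I_sq]

lemma quad_expand₂ (m k : A) (hmsa : IsSelfAdjoint m) (hksa : IsSelfAdjoint k)
    (K : Aˣ) (hK : (K : A) = k) :
    star (m + Complex.I • k) * (↑K⁻¹ * (m + Complex.I • k)) = m * (↑K⁻¹ * m) + k := by
  have h1 : (↑K⁻¹ : A) * k = 1 := by rw [← hK]; exact K.inv_mul
  have h3 : ∀ y : A, k * (↑K⁻¹ * y) = y := by
    intro y; rw [← mul_assoc, ← hK, K.mul_inv, one_mul]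
  rw [star_add, star_smul, hmsa.star_eq, hksa.star_eq, (by simp : star Complex.I = -Complex.I)]
  simp only [add_mul, mul_add, smul_mul_assoc, mul_smul_comm, mul_assoc, h1, h3, mul_one,
    smul_smul, neg_smul, mul_neg, Complex.I_mul_I, neg_neg, one_smul, neg_mul]
  match_scalars <;> simp [Complex.I_sq]

variable [PartialOrder A] [StarOrderedRing A]

lemma key_invertible (c : A) (hc : ∃ ε : ℝ, 0 < ε ∧ (ε : ℂ) • (1 : A) ≤ imPart c) :
    ∃ C : Aˣ, (C : A) = c ∧ ‖(↑C⁻¹ : A)‖ ≤ ‖Ring.inverse (imPart c)‖ := by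
  obtain hA | hA := subsingleton_or_nontrivial A
  · exact ⟨1, Subsingleton.elim _ _, by
      rw [Subsingleton.elim ((↑(1:Aˣ)⁻¹ : A)) 0, norm_zero]; positivity⟩
  obtain ⟨ε, hε, hεk⟩ := hc
  set k := imPart c with hkdef
  set m := c - Complex.I • k with hmdef
  have hcm : c = m + Complex.I • k := by rw [hmdef]; abel
  have hksa : IsSelfAdjoint k := imPart_isSelfAdjoint c
  have hmsa : IsSelfAdjoint m := rePart_isSelfAdjoint c
  have hε1 : algebraMap ℝ A ε ≤ k := by
    rw [Algebra.algebraMap_eq_smul_one, ← Complex.coe_smul]; exact hεk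
  have hε0 : (0:A) ≤ algebraMap ℝ A ε := by
    rw [Algebra.algebraMap_eq_smul_one]; exact smul_nonneg hε.le zero_le_one
  have hεu : IsUnit (algebraMap ℝ A ε) := (isUnit_iff_ne_zero.mpr hε.ne').map (algebraMap ℝ A)
  have hk0 : (0:A) ≤ k := hε0.trans hε1
  obtain ⟨K, hK⟩ : IsUnit k := CStarAlgebra.isUnit_of_le _ hε1 (hεu.isStrictlyPositive hε0)
  have hKinv0 : (0:A) ≤ ↑K⁻¹ := CFC.inv_nonneg_of_nonneg K (hK ▸ hk0)
  have hexp₁ : c * ↑K⁻¹ * star c = m * (↑K⁻¹ * m) + k := by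
    rw [hcm]; exact quad_expand₁ m k hmsa hksa K hK
  have hexp₂ : star c * (↑K⁻¹ * c) = m * (↑K⁻¹ * m) + k := by
    rw [hcm]; exact quad_expand₂ m k hmsa hksa K hK
  have hconj0 : (0:A) ≤ m * (↑K⁻¹ * m) := by
    have := star_right_conjugate_nonneg hKinv0 m
    rwa [hmsa.star_eq, mul_assoc] at this
  have hdk : k ≤ c * ↑K⁻¹ * star c := by
    rw [hexp₁]; exact le_add_of_nonneg_left hconj0
  obtain ⟨D, hD⟩ : IsUnit (c * ↑K⁻¹ * star c) :=
    CStarAlgebra.isUnit_of_le _ (hε1.trans hdk) (hεu.isStrictlyPositive hε0)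
  have hcv : c * (↑K⁻¹ * star c * ↑D⁻¹) = 1 := by
    rw [show c * (↑K⁻¹ * star c * ↑D⁻¹) = (c * ↑K⁻¹ * star c) * ↑D⁻¹ by
      simp only [mul_assoc], ← hD, D.mul_inv]
  have huc : (↑D⁻¹ * (star c * ↑K⁻¹)) * c = 1 := by
    rw [show (↑D⁻¹ * (star c * ↑K⁻¹)) * c = ↑D⁻¹ * (star c * (↑K⁻¹ * c)) by
      simp only [mul_assoc], hexp₂, ← hexp₁, ← hD, D.inv_mul]
  have huv : (↑D⁻¹ * (star c * ↑K⁻¹) : A) = ↑K⁻¹ * star c * ↑D⁻¹ := by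
    calc (↑D⁻¹ * (star c * ↑K⁻¹) : A)
        = (↑D⁻¹ * (star c * ↑K⁻¹)) * (c * (↑K⁻¹ * star c * ↑D⁻¹)) := by rw [hcv, mul_one]
      _ = ((↑D⁻¹ * (star c * ↑K⁻¹)) * c) * (↑K⁻¹ * star c * ↑D⁻¹) := by simp only [mul_assoc]
      _ = ↑K⁻¹ * star c * ↑D⁻¹ := by rw [huc, one_mul]
  refine ⟨⟨c, ↑K⁻¹ * star c * ↑D⁻¹, hcv, by rw [← huv]; exact huc⟩, rfl, ?_⟩
  set C : Aˣ := ⟨c, ↑K⁻¹ * star c * ↑D⁻¹, hcv, by rw [← huv]; exact huc⟩ with hCdef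
  have e2 : (↑C⁻¹ * c : A) = 1 := C.inv_mul
  have e3 : star c * star (↑C⁻¹ : A) = 1 := by rw [← star_mul, e2, star_one]
  have hmain : ↑C⁻¹ * k * star ↑C⁻¹ ≤ (↑K⁻¹ : A) := by
    have h := star_left_conjugate_le_conjugate hdk (star (↑C⁻¹ : A))
    rw [star_star] at h
    have e : ↑C⁻¹ * (c * ↑K⁻¹ * star c) * star (↑C⁻¹ : A)
        = (↑C⁻¹ * c) * (↑K⁻¹ * (star c * star (↑C⁻¹ : A))) := by simp only [mul_assoc]
    rwa [e, e2, e3, one_mul, mul_one] at h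
  set n : ℝ := ‖(↑K⁻¹ : A)‖ with hn
  have hn0 : 0 < n := norm_pos_iff.mpr K⁻¹.ne_zero
  have hup : (↑K⁻¹ : A) ≤ algebraMap ℝ A n :=
    IsSelfAdjoint.le_algebraMap_norm_self (.of_nonneg hKinv0)
  have hlow : algebraMap ℝ A n⁻¹ ≤ k := by
    let u : Aˣ := Units.map (algebraMap ℝ A : ℝ →* A) (Units.mk0 n hn0.ne')
    have hu : (u : A) = algebraMap ℝ A n := rfl
    have huinv : ((u⁻¹ : Aˣ) : A) = algebraMap ℝ A n⁻¹ := by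
      rw [show (u⁻¹ : Aˣ) = Units.map (algebraMap ℝ A : ℝ →* A) ((Units.mk0 n hn0.ne')⁻¹) from
        (map_inv (Units.map (algebraMap ℝ A : ℝ →* A)) _).symm, Units.coe_map]
      simp
    have h := CStarAlgebra.inv_le_inv (a := K⁻¹) (b := u) hKinv0 (hu ▸ hup)
    rwa [inv_inv, hK, huinv] at h
  have hsmul : ↑C⁻¹ * algebraMap ℝ A n⁻¹ * star ↑C⁻¹ = n⁻¹ • (↑C⁻¹ * star ↑C⁻¹ : A) := by
    rw [Algebra.algebraMap_eq_smul_one, mul_smul_comm, mul_one, smul_mul_assoc]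
  have hfinal : n⁻¹ • (↑C⁻¹ * star ↑C⁻¹ : A) ≤ ↑K⁻¹ := by
    rw [← hsmul]
    exact le_trans (by simpa [star_star] using star_left_conjugate_le_conjugate hlow (star (↑C⁻¹ : A))) hmain
  have hpos : (0:A) ≤ n⁻¹ • (↑C⁻¹ * star ↑C⁻¹ : A) :=
    smul_nonneg (by positivity) (mul_star_self_nonneg _)
  have hnorm := CStarAlgebra.norm_le_norm_of_nonneg_of_le hpos hfinal
  rw [norm_smul, CStarRing.norm_self_mul_star, Real.norm_eq_abs,
    abs_of_pos (by positivity)] at hnorm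
  have hsq : ‖(↑C⁻¹ : A)‖ * ‖(↑C⁻¹ : A)‖ ≤ n * n := by
    have h2 := (inv_mul_le_iff₀ hn0).mp hnorm
    nlinarith [norm_nonneg (↑C⁻¹ : A)]
  have hC : ‖(↑C⁻¹ : A)‖ ≤ n := by nlinarith [norm_nonneg (↑C⁻¹ : A)]
  rw [← hK, Ring.inverse_unit]
  exact hC

end aux

lemma imPart_sub_selfAdjoint' {A : Type*} [CStarAlgebra A] (b x : A) (hx : IsSelfAdjoint x) :
    imPart (b - x) = imPart b := by
  rw [imPart, imPart, star_sub, hx.star_eq]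
  congr 1
  abel

/-- Lipschitz bound for operator-valued Cauchy transforms: if `E` is a
conditional expectation onto a C*-subalgebra `𝓑` of `𝓐`, `x ∈ 𝓐` is selfadjoint and
`b₁, b₂ ∈ H⁺(𝓑)`, then `b₁ − x` and `b₂ − x` are invertible and
`‖E[(b₁ − x)⁻¹] − E[(b₂ − x)⁻¹]‖ ≤ ‖Im(b₁)⁻¹‖·‖Im(b₂)⁻¹‖·‖b₁ − b₂‖`. -/
theorem cauchy_transform_lipschitz {A : Type*} [CStarAlgebra A]
    [PartialOrder A] [StarOrderedRing A]
    (S : StarSubalgebra ℂ A) (E : A →L[ℂ] A)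
    (hmem : ∀ a : A, E a ∈ S) (hfix : ∀ b ∈ S, E b = b)
    (hbimod : ∀ x : A, ∀ b₁ ∈ S, ∀ b₂ ∈ S, E (b₁ * x * b₂) = b₁ * E x * b₂)
    (hpos : ∀ a : A, 0 ≤ a → 0 ≤ E a)
    (hcontr : ∀ a : A, ‖E a‖ ≤ ‖a‖)
    (x : A) (hx : IsSelfAdjoint x)
    (b₁ b₂ : A) (hb₁S : b₁ ∈ S) (hb₂S : b₂ ∈ S)
    (hb₁ : b₁ ∈ upperHalfPlane A) (hb₂ : b₂ ∈ upperHalfPlane A) :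
    IsUnit (b₁ - x) ∧ IsUnit (b₂ - x) ∧
    ‖E (Ring.inverse (b₁ - x)) - E (Ring.inverse (b₂ - x))‖ ≤
      ‖Ring.inverse (imPart b₁)‖ * ‖Ring.inverse (imPart b₂)‖ * ‖b₁ - b₂‖ := by
  obtain ⟨C₁, hC₁, hN₁⟩ := key_invertible (b₁ - x)
    (by rw [imPart_sub_selfAdjoint' b₁ x hx]; exact hb₁)
  obtain ⟨C₂, hC₂, hN₂⟩ := key_invertible (b₂ - x)
    (by rw [imPart_sub_selfAdjoint' b₂ x hx]; exact hb₂)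
  rw [imPart_sub_selfAdjoint' b₁ x hx] at hN₁
  rw [imPart_sub_selfAdjoint' b₂ x hx] at hN₂
  refine ⟨hC₁ ▸ C₁.isUnit, hC₂ ▸ C₂.isUnit, ?_⟩
  rw [← hC₁, ← hC₂, Ring.inverse_unit, Ring.inverse_unit]
  have hres : (↑C₁⁻¹ : A) - ↑C₂⁻¹ = ↑C₁⁻¹ * (↑C₂ - ↑C₁) * ↑C₂⁻¹ := by
    simp [mul_sub, sub_mul, mul_assoc]
  have hsub : (↑C₂ - ↑C₁ : A) = b₂ - b₁ := by rw [hC₁, hC₂]; abel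
  calc ‖E ↑C₁⁻¹ - E ↑C₂⁻¹‖ = ‖E ((↑C₁⁻¹ : A) - ↑C₂⁻¹)‖ := by rw [map_sub]
    _ ≤ ‖(↑C₁⁻¹ : A) - ↑C₂⁻¹‖ := hcontr _
    _ = ‖(↑C₁⁻¹ : A) * (b₂ - b₁) * ↑C₂⁻¹‖ := by rw [hres, hsub]
    _ ≤ ‖(↑C₁⁻¹ : A) * (b₂ - b₁)‖ * ‖(↑C₂⁻¹ : A)‖ := norm_mul_le _ _
    _ ≤ ‖(↑C₁⁻¹ : A)‖ * ‖b₂ - b₁‖ * ‖(↑C₂⁻¹ : A)‖ := by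
        gcongr; exact norm_mul_le _ _
    _ = ‖(↑C₁⁻¹ : A)‖ * ‖(↑C₂⁻¹ : A)‖ * ‖b₁ - b₂‖ := by rw [norm_sub_rev]; ring
    _ ≤ ‖Ring.inverse (imPart b₁)‖ * ‖Ring.inverse (imPart b₂)‖ * ‖b₁ - b₂‖ := by
        have h0 : 0 ≤ ‖b₁ - b₂‖ := norm_nonneg _
        gcongr <;> first | exact hN₁ | exact hN₂ | positivity
end

section
/- Let μ be a Borel probability measure on ℝ, let N ≥ 1 be an integer such that N·μ({0}) is an integer, and suppose μ is of regular type: there are c ≥ 0, β ∈ (0,1] and r₀ > 0 such that μ([−r, r]) − μ({0}) ≤ c·r^β for all 0 < r < r₀. Let y satisfy 0 < y < min{ r₀^{(2+β)/2}, (1/(4N(c+1)))^{(2+β)/(2β)} }, and let θ̃ ∈ ℝ satisfy |θ_μ(y) − θ̃| < 1/(4N). Then |N·μ({0}) − N·θ̃| < 1/2; in particular, N·μ({0}) is the unique integer nearest to N·θ̃. -/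
open MeasureTheory Filter Real

lemma im_inv_aux (y t : ℝ) : ((Complex.I * y - (t : ℂ))⁻¹).im = -y / (t ^ 2 + y ^ 2) := by
  rw [Complex.inv_im]
  simp [Complex.normSq_apply]
  ring_nf

lemma integrable_inv_aux (μ : Measure ℝ) [IsProbabilityMeasure μ] (y : ℝ) (hy : 0 < y) :
    Integrable (fun t : ℝ => (Complex.I * y - (t : ℂ))⁻¹) μ := by
  have hne : ∀ t : ℝ, Complex.I * y - (t : ℂ) ≠ 0 := by
    intro t h
    have : (Complex.I * y - (t : ℂ)).im = y := by simp
    rw [h] at this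
    simp at this
    exact hy.ne this
  have hcont : Continuous (fun t : ℝ => (Complex.I * y - (t : ℂ))⁻¹) := by
    apply Continuous.inv₀ (by continuity) hne
  refine (integrable_const (y⁻¹)).mono' hcont.aestronglyMeasurable ?_
  filter_upwards with t
  have hle : y ≤ ‖Complex.I * y - (t : ℂ)‖ :=
    le_trans (by simp [abs_of_pos hy]) (Complex.abs_im_le_norm _)
  rw [norm_inv]
  exact inv_anti₀ hy hle

lemma integrable_g_aux (μ : Measure ℝ) [IsProbabilityMeasure μ] (y : ℝ) (hy : 0 < y) :
    Integrable (fun t : ℝ => y ^ 2 / (t ^ 2 + y ^ 2)) μ := by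
  have hcont : Continuous (fun t : ℝ => y ^ 2 / (t ^ 2 + y ^ 2)) := by
    apply Continuous.div (by continuity) (by continuity)
    intro t; positivity
  refine (integrable_const (1 : ℝ)).mono' hcont.aestronglyMeasurable ?_
  filter_upwards with t
  rw [norm_eq_abs, abs_of_nonneg (by positivity)]
  rw [div_le_one (by positivity)]
  nlinarith [sq_nonneg t]

lemma theta_eq (μ : Measure ℝ) [IsProbabilityMeasure μ] (y : ℝ) (hy : 0 < y) :
    thetaFun μ y = ∫ t, y ^ 2 / (t ^ 2 + y ^ 2) ∂μ := by
  have hint := integrable_inv_aux μ y hy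
  have him : (∫ t : ℝ, (Complex.I * y - (t : ℂ))⁻¹ ∂μ).im
      = ∫ t : ℝ, ((Complex.I * y - (t : ℂ))⁻¹).im ∂μ := (integral_im hint).symm
  rw [thetaFun, cauchyTransform, him]
  simp_rw [im_inv_aux]
  rw [← integral_const_mul]
  rw [← integral_neg]
  congr 1
  ext t
  have : t ^ 2 + y ^ 2 ≠ 0 := by positivity
  field_simp

lemma theta_lower (μ : Measure ℝ) [IsProbabilityMeasure μ] (y : ℝ) (hy : 0 < y) :
    (μ {0}).toReal ≤ ∫ t, y ^ 2 / (t ^ 2 + y ^ 2) ∂μ := by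
  have h0 : (μ {0}).toReal = ∫ t, Set.indicator ({0} : Set ℝ) (fun _ => (1:ℝ)) t ∂μ := by
    rw [integral_indicator_const (1:ℝ) (measurableSet_singleton 0)]; simp [Measure.real]
  rw [h0]
  apply integral_mono _ (integrable_g_aux μ y hy)
  · intro t
    by_cases ht : t = 0
    · subst ht
      rw [Set.indicator_of_mem (Set.mem_singleton 0)]
      show (1:ℝ) ≤ y ^ 2 / ((0:ℝ) ^ 2 + y ^ 2)
      have h1 : (0:ℝ) ^ 2 + y ^ 2 = y ^ 2 := by ring
      rw [h1, div_self (by positivity)]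
    · rw [Set.indicator_of_notMem (by simpa using ht)]
      positivity
  · exact (integrable_const (1:ℝ)).indicator (measurableSet_singleton 0)

lemma theta_upper (μ : Measure ℝ) [IsProbabilityMeasure μ] (y r : ℝ) (hy : 0 < y)
    (hr : 0 < r) :
    ∫ t, y ^ 2 / (t ^ 2 + y ^ 2) ∂μ ≤
      (μ {0}).toReal + (μ (Set.Icc (-r) r \ {0})).toReal + y ^ 2 / r ^ 2 := by
  set A : Set ℝ := Set.Icc (-r) r \ {0}
  set B : Set ℝ := (Set.Icc (-r) r)ᶜ
  have hA : MeasurableSet A := measurableSet_Icc.diff (measurableSet_singleton 0)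
  have hB : MeasurableSet B := measurableSet_Icc.compl
  have hbound : ∀ t : ℝ, y ^ 2 / (t ^ 2 + y ^ 2) ≤
      Set.indicator ({0} : Set ℝ) (fun _ => (1:ℝ)) t + Set.indicator A (fun _ => (1:ℝ)) t
      + Set.indicator B (fun _ => y ^ 2 / r ^ 2) t := by
    intro t
    by_cases ht : t = 0
    · subst ht
      have h1 : (0:ℝ) ∉ A := by simp [A]
      have h2 : (0:ℝ) ∉ B := by simp [B, hr.le]
      rw [Set.indicator_of_mem (Set.mem_singleton 0), Set.indicator_of_notMem h1,
        Set.indicator_of_notMem h2]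
      rw [div_le_iff₀ (by positivity)]
      nlinarith
    · by_cases htI : t ∈ Set.Icc (-r) r
      · have h1 : t ∈ A := ⟨htI, by simpa using ht⟩
        have h2 : t ∉ B := by simpa [B] using htI
        rw [Set.indicator_of_notMem (by simpa using ht), Set.indicator_of_mem h1,
          Set.indicator_of_notMem h2]
        rw [div_le_iff₀ (by positivity)]
        nlinarith [sq_nonneg t]
      · have h1 : t ∉ A := fun h => htI h.1
        rw [Set.indicator_of_notMem (by simpa using ht), Set.indicator_of_notMem h1,
          Set.indicator_of_mem (by simpa [B] using htI)]
        have ht2 : r ^ 2 ≤ t ^ 2 := by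
          simp only [Set.mem_Icc, not_and_or, not_le] at htI
          rcases htI with h | h <;> nlinarith
        rw [zero_add, zero_add]
        rw [div_le_div_iff₀ (by positivity) (by positivity)]
        nlinarith [sq_nonneg y]
  have hi1 : Integrable (Set.indicator ({0} : Set ℝ) (fun _ => (1:ℝ))) μ :=
    (integrable_const (1:ℝ)).indicator (measurableSet_singleton 0)
  have hi2 : Integrable (Set.indicator A (fun _ => (1:ℝ))) μ :=
    (integrable_const (1:ℝ)).indicator hA
  have hi3 : Integrable (Set.indicator B (fun _ => y ^ 2 / r ^ 2)) μ :=
    (integrable_const _).indicator hB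
  have hi12 : Integrable (fun t => Set.indicator ({0} : Set ℝ) (fun _ => (1:ℝ)) t
      + Set.indicator A (fun _ => (1:ℝ)) t) μ := hi1.add hi2
  have hB1 : (μ B).toReal ≤ 1 := by
    calc (μ B).toReal ≤ (μ Set.univ).toReal :=
          ENNReal.toReal_mono (measure_ne_top μ _) (measure_mono (Set.subset_univ _))
      _ = 1 := by simp
  calc ∫ t, y ^ 2 / (t ^ 2 + y ^ 2) ∂μ
      ≤ ∫ t, (Set.indicator ({0} : Set ℝ) (fun _ => (1:ℝ)) t + Set.indicator A (fun _ => (1:ℝ)) t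
        + Set.indicator B (fun _ => y ^ 2 / r ^ 2) t) ∂μ :=
        integral_mono (integrable_g_aux μ y hy) (hi12.add hi3) hbound
    _ = (μ {0}).toReal + (μ A).toReal + y ^ 2 / r ^ 2 * (μ B).toReal := by
        rw [integral_add hi12 hi3, integral_add hi1 hi2,
          integral_indicator_const _ (measurableSet_singleton 0),
          integral_indicator_const _ hA, integral_indicator_const _ hB]
        simp [mul_comm, Measure.real]
    _ ≤ (μ {0}).toReal + (μ A).toReal + y ^ 2 / r ^ 2 := by
        nlinarith [div_nonneg (sq_nonneg y) (sq_nonneg r), hB1,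
          ENNReal.toReal_nonneg (a := μ B)]

/-- For a Borel probability measure `μ` of regular type such that `N·μ({0})`
is an integer, for suitable small `y` and any `θ̃` approximating `θ_μ(y)` up to `1/(4N)`,
one has `|N·μ({0}) − N·θ̃| < 1/2`; in particular `N·μ({0})` is the unique integer nearest
to `N·θ̃`. -/
theorem atom_recovery_from_theta_approx (μ : Measure ℝ) [IsProbabilityMeasure μ]
    (N : ℕ) (hN : 1 ≤ N) (hint : ∃ m : ℤ, (N : ℝ) * (μ {0}).toReal = (m : ℝ))
    (c β r₀ : ℝ) (hc : 0 ≤ c) (hβ : β ∈ Set.Ioc (0 : ℝ) 1) (hr₀ : 0 < r₀)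
    (hreg : ∀ r : ℝ, 0 < r → r < r₀ →
      (μ (Set.Icc (-r) r)).toReal - (μ {0}).toReal ≤ c * r ^ β)
    (y : ℝ) (hy : 0 < y)
    (hy' : y < min (r₀ ^ ((2 + β) / 2)) ((1 / (4 * N * (c + 1))) ^ ((2 + β) / (2 * β))))
    (θapp : ℝ) (hθ : |thetaFun μ y - θapp| < 1 / (4 * N)) :
    |(N : ℝ) * (μ {0}).toReal - (N : ℝ) * θapp| < 1 / 2 ∧
    ∀ m : ℤ, |(m : ℝ) - (N : ℝ) * θapp| < 1 / 2 →
      (m : ℝ) = (N : ℝ) * (μ {0}).toReal := by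
  obtain ⟨hβ0, hβ1⟩ := hβ
  have hNpos : (0:ℝ) < N := by exact_mod_cast hN
  have h2β : (0:ℝ) < 2 + β := by linarith
  set r : ℝ := y ^ ((2:ℝ) / (2 + β)) with hr_def
  have hrpos : 0 < r := rpow_pos_of_pos hy _
  set E : ℝ := y ^ (2 * β / (2 + β)) with hE_def
  have hEpos : 0 < E := rpow_pos_of_pos hy _
  set D : ℝ := 1 / (4 * N * (c + 1)) with hD_def
  have hDpos : 0 < D := by positivity
  -- r < r₀
  have hrlt : r < r₀ := by
    have h1 : y < r₀ ^ ((2 + β) / 2) := lt_of_lt_of_le hy' (min_le_left _ _)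
    have h2 := Real.rpow_lt_rpow hy.le h1 (by positivity : (0:ℝ) < 2 / (2 + β))
    have h3 : (r₀ ^ ((2 + β) / 2)) ^ ((2:ℝ) / (2 + β)) = r₀ := by
      rw [← Real.rpow_mul hr₀.le, show (2 + β) / 2 * (2 / (2 + β)) = 1 by field_simp,
        Real.rpow_one]
    rw [h3] at h2
    exact h2
  -- r ^ β = E
  have hkey : r ^ β = E := by
    rw [hr_def, ← Real.rpow_mul hy.le, hE_def]
    congr 1
    field_simp
    try ring
  -- y² / r² = E
  have hkey2 : y ^ 2 / r ^ 2 = E := by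
    have h1 : r ^ (2:ℕ) = y ^ ((2:ℝ) / (2 + β) * 2) := by
      rw [hr_def, ← Real.rpow_natCast (y ^ ((2:ℝ) / (2 + β))) 2, ← Real.rpow_mul hy.le]
      norm_num
    have h2 : y ^ (2:ℕ) = y ^ ((2:ℝ)) := by
      rw [← Real.rpow_natCast y 2]; norm_num
    rw [h1, h2, ← Real.rpow_sub hy, hE_def]
    congr 1
    field_simp
    try ring
  -- E < D
  have hED : E < D := by
    have h1 : y < D ^ ((2 + β) / (2 * β)) := lt_of_lt_of_le hy' (min_le_right _ _)
    have h2 := Real.rpow_lt_rpow hy.le h1 (by positivity : (0:ℝ) < 2 * β / (2 + β))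
    have h3 : (D ^ ((2 + β) / (2 * β))) ^ (2 * β / (2 + β)) = D := by
      rw [← Real.rpow_mul hDpos.le,
        show (2 + β) / (2 * β) * (2 * β / (2 + β)) = 1 by field_simp; try ring,
        Real.rpow_one]
    rw [h3] at h2
    exact h2
  -- measure of annulus
  have hμA : (μ (Set.Icc (-r) r \ {0})).toReal ≤ c * r ^ β := by
    have hsub : ({0} : Set ℝ) ⊆ Set.Icc (-r) r :=
      Set.singleton_subset_iff.2 ⟨by linarith, hrpos.le⟩
    have hd : μ (Set.Icc (-r) r \ {0}) = μ (Set.Icc (-r) r) - μ {0} :=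
      measure_diff hsub (measurableSet_singleton 0).nullMeasurableSet (measure_ne_top μ _)
    rw [hd, ENNReal.toReal_sub_of_le (measure_mono hsub) (measure_ne_top μ _)]
    exact hreg r hrpos hrlt
  -- |θ - μ{0}| < 1/(4N)
  have h14N : (c + 1) * D = 1 / (4 * N) := by
    rw [hD_def]
    field_simp
    try ring
  have habs : |thetaFun μ y - (μ {0}).toReal| < 1 / (4 * N) := by
    rw [theta_eq μ y hy]
    have hub := theta_upper μ y r hy hrpos
    have hlb := theta_lower μ y hy
    rw [abs_of_nonneg (by linarith)]
    have : ∫ t, y ^ 2 / (t ^ 2 + y ^ 2) ∂μ - (μ {0}).toReal ≤ (c + 1) * E := by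
      rw [hkey] at hμA
      nlinarith [hkey2]
    calc ∫ t, y ^ 2 / (t ^ 2 + y ^ 2) ∂μ - (μ {0}).toReal ≤ (c + 1) * E := this
      _ < (c + 1) * D := by nlinarith
      _ = 1 / (4 * N) := h14N
  -- conclusion part 1
  have h1 : |(μ {0}).toReal - θapp| < 1 / (2 * N) := by
    calc |(μ {0}).toReal - θapp|
        ≤ |(μ {0}).toReal - thetaFun μ y| + |thetaFun μ y - θapp| := abs_sub_le _ _ _
      _ < 1 / (4 * N) + 1 / (4 * N) := by
          rw [abs_sub_comm]; exact add_lt_add habs hθ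
      _ = 1 / (2 * N) := by field_simp; try ring
  have hmain : |(N : ℝ) * (μ {0}).toReal - (N : ℝ) * θapp| < 1 / 2 := by
    rw [← mul_sub, abs_mul, abs_of_pos hNpos]
    calc (N:ℝ) * |(μ {0}).toReal - θapp| < (N:ℝ) * (1 / (2 * N)) :=
          mul_lt_mul_of_pos_left h1 hNpos
      _ = 1 / 2 := by field_simp; try ring
  refine ⟨hmain, ?_⟩
  intro m hm
  obtain ⟨m', hm'⟩ := hint
  have hlt : |(m : ℝ) - (m' : ℝ)| < 1 := by
    calc |(m : ℝ) - (m' : ℝ)|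
        ≤ |(m : ℝ) - (N : ℝ) * θapp| + |(N : ℝ) * θapp - (m' : ℝ)| := abs_sub_le _ _ _
      _ < 1 / 2 + 1 / 2 := by
          refine add_lt_add hm ?_
          rw [abs_sub_comm, ← hm']
          exact hmain
      _ = 1 := by norm_num
  have hlt' : |m - m'| < 1 := by
    have : |((m - m' : ℤ) : ℝ)| < 1 := by push_cast; exact hlt
    rw [← Int.cast_abs] at this
    exact_mod_cast this
  have hmm : m = m' := by
    rcases abs_lt.mp hlt' with ⟨ha, hb⟩
    omega
  rw [hm', hmm]
end
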